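/- arXiv:2103.13419 — 12 statements merged into one kernel-verified Lean document; each statement's English description precedes it below -/
import Mathlib

section
/- Let r, N be positive integers and D ∈ ℝ^{N×N} the bidiagonal finite difference matrix. Then (Dʳ(Dʳ)ᵀ)_{i,j} = ((Dʳ)ᵀDʳ)_{N+1-i,N+1-j} for all i, j ∈ {1,…,N}. Consequently, for any v ∈ ℝ^N and λ ∈ ℝ, one has (Dʳ)ᵀDʳ v = λ v if and only if Dʳ(Dʳ)ᵀ (Rv) = λ (Rv), where Rv denotes the reversed vector (Rv)_i = v_{N+1-i}; in particular ‖Rv‖_∞ = ‖v‖_∞, so the left singular vectors of Dʳ are the right singular vectors with reversed entries and have the same ℓ^∞-norms. -/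
open Matrix

/-- The `N × N` bidiagonal finite difference matrix: `1` on the diagonal,
`-1` on the subdiagonal, `0` elsewhere. -/
def Dmat (N : ℕ) : Matrix (Fin N) (Fin N) ℝ :=
  Matrix.of fun i j =>
    if (i : ℕ) = (j : ℕ) then 1 else if (i : ℕ) = (j : ℕ) + 1 then -1 else 0

lemma dmat_rev (N : ℕ) (i j : Fin N) : Dmat N i.rev j.rev = Dmat N j i := by
  have hi := i.is_lt
  have hj := j.is_lt
  have e1 : (N - ((i : ℕ) + 1) = N - ((j : ℕ) + 1)) ↔ ((j : ℕ) = (i : ℕ)) := by omega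
  have e2 : (N - ((i : ℕ) + 1) = N - ((j : ℕ) + 1) + 1) ↔ ((j : ℕ) = (i : ℕ) + 1) := by
    omega
  simp [Dmat, Fin.val_rev, e1, e2]

lemma dmat_pow_rev (N r : ℕ) (i j : Fin N) :
    (Dmat N ^ r) i.rev j.rev = (Dmat N ^ r) j i := by
  induction r generalizing i j with
  | zero => simp [Matrix.one_apply, Fin.rev_inj, eq_comm]
  | succ r ih =>
    conv_lhs => rw [pow_succ]
    conv_rhs => rw [pow_succ']
    rw [Matrix.mul_apply, Matrix.mul_apply]
    refine Fintype.sum_equiv Fin.revPerm _ _ fun k => ?_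
    show (Dmat N ^ r) i.rev k * Dmat N k j.rev = Dmat N j k.rev * (Dmat N ^ r) k.rev i
    have e1 := ih i k.rev
    rw [Fin.rev_rev] at e1
    have e2 := dmat_rev N k.rev j
    rw [Fin.rev_rev] at e2
    rw [e1, e2]
    ring

/-- `(Dʳ(Dʳ)ᵀ)_{i,j} = ((Dʳ)ᵀDʳ)_{N+1-i,N+1-j}`; consequently `v` is a `λ`-eigenvector of
`(Dʳ)ᵀDʳ` iff the reversed vector `Rv` is a `λ`-eigenvector of `Dʳ(Dʳ)ᵀ`, and reversal
preserves the `ℓ∞` norm. -/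
theorem left_right_singular_vectors_reversal (r N : ℕ) (hr : 0 < r) (hN : 0 < N) :
    (∀ i j : Fin N,
      ((Dmat N ^ r) * (Dmat N ^ r)ᵀ) i j = ((Dmat N ^ r)ᵀ * (Dmat N ^ r)) i.rev j.rev) ∧
    (∀ (v : Fin N → ℝ) (lam : ℝ),
      ((Dmat N ^ r)ᵀ * (Dmat N ^ r)).mulVec v = lam • v ↔
        ((Dmat N ^ r) * (Dmat N ^ r)ᵀ).mulVec (fun i => v i.rev) =
          lam • fun i => v i.rev) ∧
    (∀ v : Fin N → ℝ, (⨆ i, |v (Fin.rev i)|) = ⨆ i, |v i|) := by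
  set A := Dmat N ^ r with hA
  have h1 : ∀ i j : Fin N, (A * Aᵀ) i j = (Aᵀ * A) i.rev j.rev := by
    intro i j
    rw [Matrix.mul_apply, Matrix.mul_apply]
    refine Fintype.sum_equiv Fin.revPerm _ _ fun k => ?_
    show A i k * Aᵀ k j = Aᵀ i.rev k.rev * A k.rev j.rev
    rw [Matrix.transpose_apply, Matrix.transpose_apply, hA, dmat_pow_rev, dmat_pow_rev]
  refine ⟨h1, ?_, ?_⟩
  · intro v lam
    have key : ∀ i : Fin N,
        (A * Aᵀ).mulVec (fun i => v i.rev) i = (Aᵀ * A).mulVec v i.rev := by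
      intro i
      rw [Matrix.mulVec, Matrix.mulVec]
      show ∑ j, (A * Aᵀ) i j * v j.rev = ∑ j, (Aᵀ * A) i.rev j * v j
      refine Fintype.sum_equiv Fin.revPerm _ _ fun j => ?_
      show (A * Aᵀ) i j * v j.rev = (Aᵀ * A) i.rev j.rev * v j.rev
      rw [h1 i j]
    constructor
    · intro h
      funext i
      have := key i
      rw [h] at this
      simpa using this
    · intro h
      funext i
      have hk := key i.rev
      rw [h] at hk
      simp only [Fin.rev_rev] at hk
      simpa using hk.symm
  · intro v
    exact Fin.rev_surjective.iSup_comp fun i => |v i|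
end

section
/- Let r be a positive integer, N a positive integer, A ∈ ℂ^{N×N} an invertible matrix, and let A^r = UΣV* be a singular value decomposition of A^r with singular values σ_1(A^r) ≥ ⋯ ≥ σ_N(A^r) on the diagonal of Σ. Suppose that for some j ∈ {1,…,N} and some α > 0 one has (σ_j(A^r))^{1/r} ≤ α·σ_N(A). Then the j-th column v_j of V satisfies ‖v_j‖_∞ ≤ α^r σ_N(A) · max_{k ∈ {1,…,N}} ‖(A^{−1})* e_k‖_2, where e_k is the k-th standard basis vector and (A^{−1})* is the conjugate transpose of A^{−1}. -/
open Matrix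

/-- `τ : Fin N → ℝ` lists the singular values of `A` in nonincreasing order, i.e. it is a
nonincreasing rearrangement of the square roots of the eigenvalues of `Aᴴ * A`. -/
def IsSingularValuesDesc {N : ℕ} (A : Matrix (Fin N) (Fin N) ℂ) (τ : Fin N → ℝ) : Prop :=
  Antitone τ ∧ ∃ (h : (Aᴴ * A).IsHermitian) (e : Fin N ≃ Fin N),
    ∀ i, τ i = Real.sqrt (h.eigenvalues (e i))

/-! Let `v` be the `j`-th column of `V` and `s = σ_N(A)`. Since `‖A x‖ ≥ s ‖x‖` for every `x`
(the spectrum of `Aᴴ A` lies in `[s², ∞)`) and `A ^ r v = σ_j u_j` with `‖u_j‖ = 1`, we get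
`s ^ (r - 1) ‖A v‖ ≤ ‖A ^ r v‖ = σ_j ≤ (α s) ^ r`, i.e. `‖A v‖ ≤ α ^ r s`. The entry `v_i` of
`v = A⁻¹ (A v)` is the inner product of `A v` with the `i`-th column of `(A⁻¹)ᴴ`, so Cauchy–Schwarz
bounds it by `α ^ r s` times the norm of that column. -/

open WithLp
open scoped MatrixOrder ComplexOrder

namespace Matrix

variable {𝕜 m n : Type*} [RCLike 𝕜] [Fintype n]

lemma norm_toLp_sq_eq_re_star_dotProduct (x : n → 𝕜) :
    ‖toLp 2 x‖ ^ 2 = RCLike.re (star x ⬝ᵥ x) := by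
  rw [@norm_sq_eq_re_inner 𝕜, EuclideanSpace.inner_toLp_toLp, dotProduct_comm]

lemma norm_mulVec_apply_le (M : Matrix m n 𝕜) (y : n → 𝕜) (i : m) :
    ‖(M *ᵥ y) i‖ ≤ ‖toLp 2 (fun k => Mᴴ k i)‖ * ‖toLp 2 y‖ := by
  have hinner : (M *ᵥ y) i = inner 𝕜 (toLp 2 (fun k => Mᴴ k i)) (toLp 2 y) := by
    simp [EuclideanSpace.inner_toLp_toLp, mulVec, dotProduct, mul_comm]
  exact hinner ▸ norm_inner_le_norm _ _

lemma norm_toLp_transpose_eq_one {U : Matrix n n 𝕜} [DecidableEq n]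
    (hU : U ∈ unitaryGroup n 𝕜) (j : n) : ‖toLp 2 (Uᵀ j)‖ = 1 := by
  have hUU : (star U * U) j j = 1 := by rw [mem_unitaryGroup_iff'.mp hU, one_apply_eq]
  have hre : ‖toLp 2 (Uᵀ j)‖ ^ 2 = 1 := by
    rw [norm_toLp_sq_eq_re_star_dotProduct, ← RCLike.one_re (K := 𝕜), ← hUU]
    rfl
  exact (pow_eq_one_iff_of_nonneg (norm_nonneg _) two_ne_zero).mp hre

lemma mulVec_transpose_apply_of_eq_mul_diagonal_mul [DecidableEq n] {M U V : Matrix n n 𝕜}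
    {d : n → 𝕜} (hV : V ∈ unitaryGroup n 𝕜) (hM : M = U * diagonal d * Vᴴ) (j : n) :
    M *ᵥ Vᵀ j = d j • Uᵀ j := by
  have hMV : M * V = U * diagonal d := by
    rw [hM, mul_assoc, ← star_eq_conjTranspose, mem_unitaryGroup_iff'.mp hV, mul_one]
  ext k
  have hkj := congrFun (congrFun hMV k) j
  rw [mul_apply, mul_diagonal] at hkj
  simpa [mulVec, dotProduct, mul_comm] using hkj

variable [DecidableEq n]

lemma IsHermitian.mul_norm_sq_le_re_dotProduct_mulVec {B : Matrix n n 𝕜} (hB : B.IsHermitian)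
    {c : ℝ} (hc : ∀ i, c ≤ hB.eigenvalues i) (x : n → 𝕜) :
    c * ‖toLp 2 x‖ ^ 2 ≤ RCLike.re (star x ⬝ᵥ (B *ᵥ x)) := by
  have hcB : algebraMap ℝ (Matrix n n 𝕜) c ≤ B := by
    refine algebraMap_le_of_le_spectrum (fun y hy => ?_) hB.isSelfAdjoint
    obtain ⟨i, rfl⟩ := hB.spectrum_real_eq_range_eigenvalues ▸ hy
    exact hc i
  have := (Matrix.le_iff.mp hcB).re_dotProduct_nonneg x
  rw [sub_mulVec, dotProduct_sub, Algebra.algebraMap_eq_smul_one, smul_mulVec, one_mulVec,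
    dotProduct_smul, map_sub, RCLike.smul_re, ← norm_toLp_sq_eq_re_star_dotProduct] at this
  linarith

lemma mul_norm_le_norm_mulVec [Fintype m] {A : Matrix m n 𝕜} {s : ℝ} (hs : 0 ≤ s)
    (h : ∀ i, s ≤ √((isHermitian_conjTranspose_mul_self A).eigenvalues i)) (x : n → 𝕜) :
    s * ‖toLp 2 x‖ ≤ ‖toLp 2 (A *ᵥ x)‖ := by
  have hsq : ∀ i, s ^ 2 ≤ (isHermitian_conjTranspose_mul_self A).eigenvalues i := fun i =>
    (Real.le_sqrt hs (eigenvalues_conjTranspose_mul_self_nonneg A i)).mp (h i)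
  have := (isHermitian_conjTranspose_mul_self A).mul_norm_sq_le_re_dotProduct_mulVec hsq x
  rw [← mulVec_mulVec, dotProduct_mulVec, ← star_mulVec, ← norm_toLp_sq_eq_re_star_dotProduct,
    ← mul_pow] at this
  exact (pow_le_pow_iff_left₀ (by positivity) (norm_nonneg _) two_ne_zero).mp this

lemma pow_mul_norm_le_norm_pow_mulVec {A : Matrix n n 𝕜} {s : ℝ} (hs : 0 ≤ s)
    (h : ∀ i, s ≤ √((isHermitian_conjTranspose_mul_self A).eigenvalues i)) (k : ℕ)
    (x : n → 𝕜) : s ^ k * ‖toLp 2 x‖ ≤ ‖toLp 2 (A ^ k *ᵥ x)‖ := by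
  induction k with
  | zero => simp
  | succ k ih =>
    calc s ^ (k + 1) * ‖toLp 2 x‖ = s * (s ^ k * ‖toLp 2 x‖) := by ring
      _ ≤ s * ‖toLp 2 (A ^ k *ᵥ x)‖ := mul_le_mul_of_nonneg_left ih hs
      _ ≤ ‖toLp 2 (A ^ (k + 1) *ᵥ x)‖ := by
        rw [pow_succ', ← mulVec_mulVec]
        exact mul_norm_le_norm_mulVec hs h _

lemma norm_mulVec_le_of_norm_pow_succ_mulVec_le {A : Matrix n n 𝕜} {s c : ℝ} (hs : 0 < s)
    (h : ∀ i, s ≤ √((isHermitian_conjTranspose_mul_self A).eigenvalues i)) {k : ℕ} {x : n → 𝕜}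
    (hx : ‖toLp 2 (A ^ (k + 1) *ᵥ x)‖ ≤ (c * s) ^ (k + 1)) :
    ‖toLp 2 (A *ᵥ x)‖ ≤ c ^ (k + 1) * s := by
  have hpow := pow_mul_norm_le_norm_pow_mulVec hs.le h k (A *ᵥ x)
  rw [mulVec_mulVec, ← pow_succ] at hpow
  refine le_of_mul_le_mul_left ?_ (pow_pos hs k)
  calc s ^ k * ‖toLp 2 (A *ᵥ x)‖ ≤ (c * s) ^ (k + 1) := hpow.trans hx
    _ = s ^ k * (c ^ (k + 1) * s) := by ring

lemma sqrt_eigenvalues_conjTranspose_mul_self_pos {A : Matrix n n 𝕜} (hA : IsUnit A.det)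
    (i : n) : 0 < √((isHermitian_conjTranspose_mul_self A).eigenvalues i) :=
  Real.sqrt_pos.mpr <| (PosDef.conjTranspose_mul_self A
    (mulVec_injective_of_isUnit ((isUnit_iff_isUnit_det A).mpr hA))).eigenvalues_pos i

end Matrix

namespace IsSingularValuesDesc

variable {N : ℕ} {A : Matrix (Fin N) (Fin N) ℂ} {τ : Fin N → ℝ}

lemma le_sqrt_eigenvalues (hτ : IsSingularValuesDesc A τ) (hN : N - 1 < N) (k : Fin N) :
    τ ⟨N - 1, hN⟩ ≤ √((isHermitian_conjTranspose_mul_self A).eigenvalues k) := by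
  obtain ⟨hanti, _, e, he⟩ := hτ
  have hlast : e.symm k ≤ ⟨N - 1, hN⟩ := Fin.mk_le_mk.mpr (by omega)
  simpa [he] using hanti hlast

lemma pos (hτ : IsSingularValuesDesc A τ) (hA : IsUnit A.det) (i : Fin N) : 0 < τ i := by
  obtain ⟨-, _, e, he⟩ := hτ
  exact he i ▸ sqrt_eigenvalues_conjTranspose_mul_self_pos hA (e i)

end IsSingularValuesDesc

theorem linfty_bound_right_singular_vector_of_power_general (r N : ℕ) (hr : 0 < r) (hN : 0 < N)
    (A : Matrix (Fin N) (Fin N) ℂ) (hA : IsUnit A.det)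
    (U V : Matrix (Fin N) (Fin N) ℂ)
    (hU : U ∈ Matrix.unitaryGroup (Fin N) ℂ) (hV : V ∈ Matrix.unitaryGroup (Fin N) ℂ)
    (σ : Fin N → ℝ) (hσnonneg : ∀ i, 0 ≤ σ i)
    (hSVD : A ^ r = U * Matrix.diagonal (fun i => (σ i : ℂ)) * Vᴴ)
    (τ : Fin N → ℝ) (hτ : IsSingularValuesDesc A τ)
    (j : Fin N) (α : ℝ)
    (hcond : σ j ^ ((r : ℝ)⁻¹) ≤ α * τ ⟨N - 1, Nat.sub_lt hN Nat.one_pos⟩) :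
    ∀ i, ‖V i j‖ ≤
      α ^ r * τ ⟨N - 1, Nat.sub_lt hN Nat.one_pos⟩ *
        ⨆ k : Fin N, Real.sqrt (∑ i', ‖(A⁻¹)ᴴ i' k‖ ^ 2) := by
  intro i
  obtain ⟨q, rfl⟩ := Nat.exists_eq_add_one_of_ne_zero hr.ne'
  set s := τ ⟨N - 1, Nat.sub_lt hN Nat.one_pos⟩
  have hσj : σ j ≤ (α * s) ^ (q + 1) :=
    Real.rpow_inv_natCast_pow (hσnonneg j) q.succ_ne_zero ▸
      pow_le_pow_left₀ (Real.rpow_nonneg (hσnonneg j) _) hcond _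
  have hApow : ‖toLp 2 (A ^ (q + 1) *ᵥ Vᵀ j)‖ = σ j := by
    rw [mulVec_transpose_apply_of_eq_mul_diagonal_mul hV hSVD, toLp_smul, norm_smul,
      norm_toLp_transpose_eq_one hU, mul_one, Complex.norm_real, Real.norm_of_nonneg (hσnonneg j)]
  have hAv : ‖toLp 2 (A *ᵥ Vᵀ j)‖ ≤ α ^ (q + 1) * s :=
    norm_mulVec_le_of_norm_pow_succ_mulVec_le (hτ.pos hA _) (hτ.le_sqrt_eigenvalues _)
      (hApow.trans_le hσj)
  have hrow : ‖toLp 2 (fun k => (A⁻¹)ᴴ k i)‖ ≤ ⨆ k : Fin N, √(∑ i', ‖(A⁻¹)ᴴ i' k‖ ^ 2) :=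
    (EuclideanSpace.norm_eq _).trans_le <|
      le_ciSup (f := fun k => √(∑ i', ‖(A⁻¹)ᴴ i' k‖ ^ 2)) (Set.finite_range _).bddAbove i
  calc ‖V i j‖ = ‖(A⁻¹ *ᵥ (A *ᵥ Vᵀ j)) i‖ := by
        rw [mulVec_mulVec, nonsing_inv_mul _ hA, one_mulVec, transpose_apply]
    _ ≤ ‖toLp 2 (fun k => (A⁻¹)ᴴ k i)‖ * ‖toLp 2 (A *ᵥ Vᵀ j)‖ := norm_mulVec_apply_le _ _ _
    _ ≤ (⨆ k : Fin N, √(∑ i', ‖(A⁻¹)ᴴ i' k‖ ^ 2)) * (α ^ (q + 1) * s) :=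
        mul_le_mul hrow hAv (norm_nonneg _) ((norm_nonneg _).trans hrow)
    _ = _ := by ring

/-- Let `A ∈ ℂ^{N×N}` be invertible and let `A^r = U Σ Vᴴ` be an SVD of `A^r` with
nonincreasing singular values `σ` on the diagonal of `Σ`.  If `(σ_j)^{1/r} ≤ α σ_N(A)`
for some `j` and `α > 0`, then the `j`-th column `v_j` of `V` satisfies
`‖v_j‖_∞ ≤ α^r σ_N(A) · max_k ‖(A⁻¹)ᴴ e_k‖₂`. -/
theorem linfty_bound_right_singular_vector_of_power (r N : ℕ) (hr : 0 < r) (hN : 0 < N)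
    (A : Matrix (Fin N) (Fin N) ℂ) (hA : IsUnit A.det)
    (U V : Matrix (Fin N) (Fin N) ℂ)
    (hU : U ∈ Matrix.unitaryGroup (Fin N) ℂ) (hV : V ∈ Matrix.unitaryGroup (Fin N) ℂ)
    (σ : Fin N → ℝ) (hσanti : Antitone σ) (hσnonneg : ∀ i, 0 ≤ σ i)
    (hSVD : A ^ r = U * Matrix.diagonal (fun i => (σ i : ℂ)) * Vᴴ)
    (τ : Fin N → ℝ) (hτ : IsSingularValuesDesc A τ)
    (j : Fin N) (α : ℝ) (hα : 0 < α)
    (hcond : σ j ^ ((r : ℝ)⁻¹) ≤ α * τ ⟨N - 1, Nat.sub_lt hN Nat.one_pos⟩) :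
    ∀ i, ‖V i j‖ ≤
      α ^ r * τ ⟨N - 1, Nat.sub_lt hN Nat.one_pos⟩ *
        ⨆ k : Fin N, Real.sqrt (∑ i', ‖(A⁻¹)ᴴ i' k‖ ^ 2) :=
  linfty_bound_right_singular_vector_of_power_general r N hr hN A hA U V hU hV σ hσnonneg hSVD τ hτ
    j α hcond
end

section
/- Let r, N be positive integers with r < N/2, let D ∈ ℝ^{N×N} be the bidiagonal finite difference matrix, and set M = (Dʳ)ᵀ Dʳ. Then M is symmetric, M_{i,j} = 0 whenever |i − j| > r, and for every m ∈ {0,1,…,r} and every j ∈ {1,…,N} with j − m ≥ 1: if j − m ≤ N − r then M_{j−m,j} = (−1)^m · binom(2r, r−m), while if j − m > N − r then M_{j−m,j} = (−1)^m · Σ_{l=0}^{N−j} binom(r, l+m) · binom(r, l). -/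
open Matrix

noncomputable def F (r i j : ℕ) : ℝ :=
  if j ≤ i then (-1 : ℝ) ^ (i - j) * (Nat.choose r (i - j) : ℝ) else 0

lemma Dpow_apply (N r : ℕ) (i j : Fin N) :
    (Dmat N ^ r) i j = F r (i : ℕ) (j : ℕ) := by
  induction r generalizing i j with
  | zero =>
    simp only [pow_zero, F]
    rw [Matrix.one_apply]
    rcases le_or_gt (j : ℕ) (i : ℕ) with h | h
    · rcases eq_or_lt_of_le h with h' | h'
      · have : i = j := Fin.ext h'.symm
        simp [this, h]
      · have hne : i ≠ j := by intro e; rw [e] at h'; omega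
        have : (i : ℕ) - (j : ℕ) ≠ 0 := by omega
        simp [hne, h, Nat.choose_eq_zero_of_lt (by omega : 0 < (i:ℕ) - j)]
    · have hne : i ≠ j := by intro e; rw [e] at h; omega
      simp [hne, not_le.mpr h]
  | succ r ih =>
    rw [pow_succ', Matrix.mul_apply]
    have hterm : ∀ k : Fin N, Dmat N i k * (Dmat N ^ r) k j =
        (if (i : ℕ) = (k : ℕ) then F r k j else 0)
          - (if (i : ℕ) = (k : ℕ) + 1 then F r k j else 0) := by
      intro k
      rw [ih]
      simp only [Dmat, Matrix.of_apply]
      by_cases h1 : (i : ℕ) = (k : ℕ)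
      · have h2 : ¬ (i : ℕ) = (k : ℕ) + 1 := by omega
        simp [h1, h2]
      · by_cases h2 : (i : ℕ) = (k : ℕ) + 1
        · simp [h1, h2]
        · simp [h1, h2]
    rw [Finset.sum_congr rfl (fun k _ => hterm k), Finset.sum_sub_distrib]
    have hs1 : (∑ k : Fin N, if (i : ℕ) = (k : ℕ) then F r k j else 0) = F r i j := by
      rw [Finset.sum_eq_single i]
      · simp
      · intro k _ hk
        have : (i : ℕ) ≠ (k : ℕ) := fun e => hk (Fin.ext e.symm)
        simp [this]
      · simp
    rw [hs1]
    by_cases h0 : (i : ℕ) = 0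
    · have hs2 : (∑ k : Fin N, if (i : ℕ) = (k : ℕ) + 1 then F r k j else 0) = 0 := by
        apply Finset.sum_eq_zero
        intro k _
        have : ¬ (i : ℕ) = (k : ℕ) + 1 := by omega
        simp [this]
      rw [hs2, sub_zero]
      -- i = 0 case: F (r+1) i j = F r i j
      simp only [F]
      rcases le_or_gt (j : ℕ) (i : ℕ) with h | h
      · have : (i : ℕ) - (j : ℕ) = 0 := by omega
        simp [h, this]
      · simp [not_le.mpr h]
    · have hlt : (i : ℕ) - 1 < N := by omega
      have hs2 : (∑ k : Fin N, if (i : ℕ) = (k : ℕ) + 1 then F r k j else 0)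
          = F r ((i : ℕ) - 1) (j : ℕ) := by
        rw [Finset.sum_eq_single (⟨(i : ℕ) - 1, hlt⟩ : Fin N)]
        · simp only []
          have : (i : ℕ) = ((i : ℕ) - 1) + 1 := by omega
          rw [if_pos this]
        · intro k _ hk
          have : ¬ (i : ℕ) = (k : ℕ) + 1 := by
            intro e
            apply hk
            apply Fin.ext
            show (k:ℕ) = (i:ℕ) - 1
            omega
          simp [this]
        · simp
      rw [hs2]
      -- now pure ℕ/ℝ computation
      simp only [F]
      rcases le_or_gt (j : ℕ) (i : ℕ) with h | h
      · rcases eq_or_lt_of_le h with h' | h'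
        · -- j = i
          have h1 : (i:ℕ) - (j:ℕ) = 0 := by omega
          have h2 : ¬ ((j:ℕ) ≤ (i:ℕ) - 1) := by omega
          simp [h, h1, h2]
        · -- j < i
          have h2 : (j:ℕ) ≤ (i:ℕ) - 1 := by omega
          rw [if_pos h, if_pos h, if_pos h2]
          have e1 : (i:ℕ) - (j:ℕ) = ((i:ℕ) - 1 - (j:ℕ)) + 1 := by omega
          rw [e1, Nat.choose_succ_succ]
          push_cast
          ring
      · have : ¬ ((j:ℕ) ≤ (i:ℕ) - 1) := by omega
        simp [not_le.mpr h, this]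

lemma vandermonde_nat (r m : ℕ) (hm : m ≤ r) :
    ∑ l ∈ Finset.range (r - m + 1), Nat.choose r (l + m) * Nat.choose r l
      = Nat.choose (2 * r) (r - m) := by
  rw [two_mul, Nat.add_choose_eq, Finset.Nat.sum_antidiagonal_eq_sum_range_succ_mk]
  apply Finset.sum_congr rfl
  intro p hp
  simp only [Finset.mem_range] at hp
  have h1 : r - m - p = r - (p + m) := by omega
  have h2 : p + m ≤ r := by omega
  rw [h1, Nat.choose_symm h2, mul_comm]

lemma Msum (N r : ℕ) (a b : Fin N) (hab : (a : ℕ) ≤ (b : ℕ)) :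
    ((Dmat N ^ r)ᵀ * (Dmat N ^ r)) a b =
      (-1 : ℝ) ^ ((b : ℕ) - (a : ℕ)) *
        ∑ l ∈ Finset.range (N - (b : ℕ)),
          (Nat.choose r (l + ((b : ℕ) - (a : ℕ))) : ℝ) * (Nat.choose r l : ℝ) := by
  rw [Matrix.mul_apply]
  simp only [Matrix.transpose_apply, Dpow_apply]
  rw [Fin.sum_univ_eq_sum_range (fun k => F r k a * F r k b) N]
  rw [← Finset.sum_range_add_sum_Ico _ (le_of_lt b.isLt)]
  have hz : ∑ k ∈ Finset.range (b : ℕ), F r k (a : ℕ) * F r k (b : ℕ) = 0 := by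
    apply Finset.sum_eq_zero
    intro k hk
    simp only [Finset.mem_range] at hk
    have : ¬ ((b : ℕ) ≤ k) := by omega
    simp [F, this]
  rw [hz, zero_add, Finset.sum_Ico_eq_sum_range]
  rw [Finset.mul_sum]
  apply Finset.sum_congr rfl
  intro l _
  have h1 : (a : ℕ) ≤ (b : ℕ) + l := by omega
  have h2 : (b : ℕ) ≤ (b : ℕ) + l := by omega
  have e1 : (b : ℕ) + l - (a : ℕ) = l + ((b : ℕ) - (a : ℕ)) := by omega
  have e2 : (b : ℕ) + l - (b : ℕ) = l := by omega
  simp only [F, if_pos h1, if_pos h2, e1, e2]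
  have hsq : ((-1 : ℝ)) ^ l * (-1) ^ l = 1 := by
    rw [← pow_add]
    exact Even.neg_one_pow ⟨l, rfl⟩
  rw [pow_add]
  linear_combination ((-1 : ℝ) ^ ((b : ℕ) - (a : ℕ)) *
    (Nat.choose r (l + ((b : ℕ) - (a : ℕ))) : ℝ) * (Nat.choose r l : ℝ)) * hsq

/-- For `r < N/2`, `M = (Dʳ)ᵀ Dʳ` is symmetric, banded with bandwidth `r`, and its entries
`M_{j-m,j}` (here `j : Fin N` encodes the math index `j+1`, and the math conditions
`j - m ≤ N - r` resp. `j - m > N - r` become `(j+1) - m ≤ N - r` resp. `>` in `ℕ`)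
are given by the stated binomial formulas. -/
theorem entries_of_DrT_mul_Dr (r N : ℕ) (hr : 0 < r) (h2r : 2 * r < N) :
    ((Dmat N ^ r)ᵀ * (Dmat N ^ r))ᵀ = (Dmat N ^ r)ᵀ * (Dmat N ^ r) ∧
    (∀ i j : Fin N, (r : ℤ) < |(i : ℤ) - (j : ℤ)| →
      ((Dmat N ^ r)ᵀ * (Dmat N ^ r)) i j = 0) ∧
    (∀ (j : Fin N) (m : ℕ), m ≤ r → m ≤ (j : ℕ) →
      ((j : ℕ) + 1 - m ≤ N - r →
        ((Dmat N ^ r)ᵀ * (Dmat N ^ r))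
            ⟨(j : ℕ) - m, lt_of_le_of_lt (Nat.sub_le _ _) j.isLt⟩ j =
          (-1 : ℝ) ^ m * (Nat.choose (2 * r) (r - m) : ℝ)) ∧
      (N - r < (j : ℕ) + 1 - m →
        ((Dmat N ^ r)ᵀ * (Dmat N ^ r))
            ⟨(j : ℕ) - m, lt_of_le_of_lt (Nat.sub_le _ _) j.isLt⟩ j =
          (-1 : ℝ) ^ m *
            ∑ l ∈ Finset.range (N - ((j : ℕ) + 1) + 1),
              (Nat.choose r (l + m) : ℝ) * (Nat.choose r l : ℝ))) := by
  refine ⟨by rw [Matrix.transpose_mul, Matrix.transpose_transpose], ?_, ?_⟩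
  · intro i j hij
    rw [Matrix.mul_apply]
    apply Finset.sum_eq_zero
    intro k _
    simp only [Matrix.transpose_apply, Dpow_apply, F]
    have hij' : (i : ℕ) + r < (j : ℕ) ∨ (j : ℕ) + r < (i : ℕ) := by
      rcases abs_cases ((i : ℤ) - (j : ℤ)) with ⟨h, _⟩ | ⟨h, _⟩ <;> rw [h] at hij <;> omega
    by_cases h1 : (i : ℕ) ≤ (k : ℕ)
    · by_cases h2 : (j : ℕ) ≤ (k : ℕ)
      · have : r < (k : ℕ) - (i : ℕ) ∨ r < (k : ℕ) - (j : ℕ) := by omega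
        rcases this with h | h <;>
          simp [h1, h2, Nat.choose_eq_zero_of_lt h]
      · simp [h2]
    · simp [h1]
  · intro j m hmr hmj
    set a : Fin N := ⟨(j : ℕ) - m, lt_of_le_of_lt (Nat.sub_le _ _) j.isLt⟩
    have ha : (a : ℕ) = (j : ℕ) - m := rfl
    have hab : (a : ℕ) ≤ (j : ℕ) := by omega
    have hba : (j : ℕ) - (a : ℕ) = m := by omega
    have hM := Msum N r a j hab
    rw [hba] at hM
    constructor
    · intro hcase
      rw [hM]
      congr 1
      have hNj : r - m + 1 ≤ N - (j : ℕ) := by omega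
      rw [← Finset.sum_subset (Finset.range_subset_range.mpr hNj)]
      · rw [← vandermonde_nat r m hmr]
        push_cast
        rfl
      · intro l _ hl
        simp only [Finset.mem_range] at hl
        have : r < l + m := by omega
        simp [Nat.choose_eq_zero_of_lt this]
    · intro _
      rw [hM]
      congr 1
      have : N - ((j : ℕ) + 1) + 1 = N - (j : ℕ) := by
        have := j.isLt; omega
      rw [this]
end

section
/- Let r, N be positive integers with r < N/2, let D ∈ ℝ^{N×N} be the bidiagonal finite difference matrix, let λ ∈ ℝ, and let v ∈ ℝ^N satisfy (Dʳ)ᵀDʳ v = λ v. Then there exists a sequence ṽ : ℤ → ℝ such that (i) ṽ_i = 0 for all 1−r ≤ i ≤ 0; (ii) ṽ_i = v_i for all 1 ≤ i ≤ N; (iii) Σ_{k=0}^{r} (−1)^k binom(r,k) ṽ_{i−k} = 0 for all N+1 ≤ i ≤ N+r; and (iv) Σ_{k=0}^{2r} (−1)^{k+r} binom(2r,k) ṽ_{i−r+k} = λ ṽ_i for all i ∈ ℤ. -/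
open Matrix

namespace EigExt

open Finset

/-! ### Difference calculus on `ℤ → ℝ` -/

def fdiff (g : ℤ → ℝ) : ℤ → ℝ := fun i => g i - g (i + 1)

def bdiff (g : ℤ → ℝ) : ℤ → ℝ := fun i => g i - g (i - 1)

lemma fdiff_const_mul (c : ℝ) (g : ℤ → ℝ) :
    fdiff (fun j => c * g j) = fun j => c * fdiff g j := by
  funext j; simp only [fdiff]; ring

lemma fdiff_iter_const_mul (n : ℕ) (c : ℝ) (g : ℤ → ℝ) :
    fdiff^[n] (fun j => c * g j) = fun i => c * fdiff^[n] g i := by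
  induction n generalizing g with
  | zero => simp
  | succ n ih =>
    rw [Function.iterate_succ_apply, Function.iterate_succ_apply, fdiff_const_mul, ih]

lemma fdiff_shift (d : ℤ) (g : ℤ → ℝ) :
    fdiff (fun j => g (j - d)) = fun j => fdiff g (j - d) := by
  funext j; simp only [fdiff]
  have : j + 1 - d = j - d + 1 := by ring
  rw [this]

lemma fdiff_iter_shift (n : ℕ) (d : ℤ) (g : ℤ → ℝ) :
    fdiff^[n] (fun j => g (j - d)) = fun i => fdiff^[n] g (i - d) := by
  induction n generalizing g with
  | zero => simp
  | succ n ih =>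
    rw [Function.iterate_succ_apply, Function.iterate_succ_apply, fdiff_shift, ih]

lemma fdiff_eq_neg_fwdDiff (g : ℤ → ℝ) :
    fdiff g = fun j => (-1 : ℝ) * (fwdDiff (1:ℤ) g j) := by
  funext j; simp only [fdiff, fwdDiff]; ring

lemma fdiff_iter_eq (n : ℕ) (g : ℤ → ℝ) (i : ℤ) :
    fdiff^[n] g i = (-1 : ℝ)^n * (fwdDiff (1:ℤ))^[n] g i := by
  induction n generalizing g i with
  | zero => simp
  | succ n ih =>
    rw [Function.iterate_succ_apply, Function.iterate_succ_apply,
      fdiff_eq_neg_fwdDiff, fdiff_iter_const_mul]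
    simp only [ih]
    ring

lemma fdiff_iter_sum (n : ℕ) (g : ℤ → ℝ) (i : ℤ) :
    fdiff^[n] g i = ∑ k ∈ range (n + 1), (-1 : ℝ)^k * (n.choose k : ℝ) * g (i + k) := by
  rw [fdiff_iter_eq, fwdDiff_iter_eq_sum_shift, Finset.mul_sum]
  refine Finset.sum_congr rfl fun k hk => ?_
  have hk' : k ≤ n := by simpa [Nat.lt_succ_iff] using hk
  have hsm : ((-1 : ℤ) ^ (n - k) * (n.choose k : ℤ)) • g (i + k • (1:ℤ))
      = ((-1 : ℝ) ^ (n - k) * (n.choose k : ℝ)) * g (i + k) := by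
    rw [zsmul_eq_mul]
    push_cast
    ring
  rw [hsm]
  have hpow : (-1:ℝ)^n * (-1:ℝ)^(n-k) = (-1:ℝ)^k := by
    rw [← pow_add]
    have h2 : n + (n - k) = k + 2 * (n - k) := by omega
    rw [h2, pow_add, pow_mul]
    norm_num
  calc (-1:ℝ)^n * ((-1:ℝ)^(n-k) * (n.choose k : ℝ) * g (i + k))
      = ((-1:ℝ)^n * (-1:ℝ)^(n-k)) * (n.choose k : ℝ) * g (i + k) := by ring
    _ = (-1:ℝ)^k * (n.choose k : ℝ) * g (i + k) := by rw [hpow]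

lemma bdiff_eq (g : ℤ → ℝ) : bdiff g = fun j => (-1 : ℝ) * fdiff g (j - 1) := by
  funext j; simp only [bdiff, fdiff]
  have : j - 1 + 1 = j := by ring
  rw [this]; ring

lemma bdiff_iter_eq (n : ℕ) (g : ℤ → ℝ) (i : ℤ) :
    bdiff^[n] g i = (-1 : ℝ)^n * fdiff^[n] g (i - n) := by
  induction n generalizing g i with
  | zero => simp
  | succ n ih =>
    rw [Function.iterate_succ_apply, ih (bdiff g) i, bdiff_eq]
    have h1 : fdiff^[n] (fun j => (-1:ℝ) * fdiff g (j - 1)) (i - n)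
        = (-1:ℝ) * fdiff^[n] (fun t => fdiff g (t - 1)) (i - n) := by
      rw [fdiff_iter_const_mul]
    rw [h1]
    simp only [fdiff_iter_shift]
    rw [← Function.iterate_succ_apply]
    have h2 : i - (n:ℤ) - 1 = i - ((n + 1 : ℕ) : ℤ) := by push_cast; ring
    rw [h2]
    ring

lemma bdiff_iter_sum (n : ℕ) (g : ℤ → ℝ) (i : ℤ) :
    bdiff^[n] g i = ∑ l ∈ range (n + 1), (-1 : ℝ)^l * (n.choose l : ℝ) * g (i - l) := by
  rw [bdiff_iter_eq, fdiff_iter_sum, Finset.mul_sum]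
  rw [← Finset.sum_range_reflect]
  refine Finset.sum_congr rfl fun l hl => ?_
  have hl' : l ≤ n := by simpa [Nat.lt_succ_iff] using hl
  have hidx : i - (n:ℤ) + ((n - l : ℕ) : ℤ) = i - l := by
    have : ((n - l : ℕ) : ℤ) = (n : ℤ) - l := by omega
    rw [this]; ring
  have hn1 : n + 1 - 1 - l = n - l := by omega
  rw [hn1, hidx, Nat.choose_symm hl']
  have hpow : (-1:ℝ)^n * (-1:ℝ)^(n-l) = (-1:ℝ)^l := by
    rw [← pow_add]
    have h2 : n + (n - l) = l + 2 * (n - l) := by omega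
    rw [h2, pow_add, pow_mul]
    norm_num
  calc (-1:ℝ)^n * ((-1:ℝ)^(n-l) * (n.choose l : ℝ) * g (i - l))
      = ((-1:ℝ)^n * (-1:ℝ)^(n-l)) * (n.choose l : ℝ) * g (i - l) := by ring
    _ = (-1:ℝ)^l * (n.choose l : ℝ) * g (i - l) := by rw [hpow]

lemma key_identity (r : ℕ) (g : ℤ → ℝ) (i : ℤ) :
    ∑ k ∈ range (2 * r + 1), (-1 : ℝ)^(k + r) * ((2 * r).choose k : ℝ) * g (i - r + k)
      = fdiff^[r] (bdiff^[r] g) i := by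
  have hb : bdiff^[r] g = fun j => (-1:ℝ)^r * (fun t => fdiff^[r] g (t - r)) j := by
    funext j; exact bdiff_iter_eq r g j
  rw [hb, fdiff_iter_const_mul]
  simp only [fdiff_iter_shift]
  rw [← Function.iterate_add_apply]
  have h2r : r + r = 2 * r := by omega
  rw [h2r, fdiff_iter_sum, Finset.mul_sum]
  refine Finset.sum_congr rfl fun k hk => ?_
  rw [pow_add]
  ring

lemma fdiff_iter_congr (n : ℕ) (g₁ g₂ : ℤ → ℝ) (i : ℤ)
    (h : ∀ k ∈ range (n + 1), g₁ (i + k) = g₂ (i + k)) :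
    fdiff^[n] g₁ i = fdiff^[n] g₂ i := by
  rw [fdiff_iter_sum, fdiff_iter_sum]
  exact Finset.sum_congr rfl fun k hk => by rw [h k hk]

lemma bdiff_iter_congr (n : ℕ) (g₁ g₂ : ℤ → ℝ) (i : ℤ)
    (h : ∀ k ∈ range (n + 1), g₁ (i - k) = g₂ (i - k)) :
    bdiff^[n] g₁ i = bdiff^[n] g₂ i := by
  rw [bdiff_iter_sum, bdiff_iter_sum]
  exact Finset.sum_congr rfl fun k hk => by rw [h k hk]

/-! ### Zero extension and matrix correspondence -/

/-- zero extension of a vector to `ℤ`, with `i : Fin N` placed at `i+1`. -/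
def ev (N : ℕ) (x : Fin N → ℝ) : ℤ → ℝ := fun i =>
  if h : 1 ≤ i ∧ i ≤ N then x ⟨(i - 1).toNat, by omega⟩ else 0

variable {N : ℕ}

lemma ev_fin (x : Fin N → ℝ) (m : Fin N) : ev N x ((m : ℤ) + 1) = x m := by
  have h : 1 ≤ (m : ℤ) + 1 ∧ (m : ℤ) + 1 ≤ N := by
    constructor <;> [omega; (have := m.2; omega)]
  rw [ev, dif_pos h]
  congr 1
  ext
  simp only [Fin.val_natCast]
  omega

lemma ev_nonpos (x : Fin N → ℝ) (i : ℤ) (h : i ≤ 0) : ev N x i = 0 := by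
  rw [ev, dif_neg]; omega

lemma ev_gt (x : Fin N → ℝ) (i : ℤ) (h : (N : ℤ) < i) : ev N x i = 0 := by
  rw [ev, dif_neg]; omega

lemma bdiff_iter_ev_nonpos (x : Fin N → ℝ) (n : ℕ) (i : ℤ) (h : i ≤ 0) :
    bdiff^[n] (ev N x) i = 0 := by
  rw [bdiff_iter_sum]
  refine Finset.sum_eq_zero fun l _ => ?_
  rw [ev_nonpos x _ (by omega), mul_zero]

lemma fdiff_iter_ev_gt (x : Fin N → ℝ) (n : ℕ) (i : ℤ) (h : (N : ℤ) < i) :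
    fdiff^[n] (ev N x) i = 0 := by
  rw [fdiff_iter_sum]
  refine Finset.sum_eq_zero fun k _ => ?_
  rw [ev_gt x _ (by omega), mul_zero]

lemma Dmat_mulVec (x : Fin N → ℝ) (m : Fin N) :
    (Dmat N).mulVec x m
      = x m - (if h : 1 ≤ (m : ℕ) then x ⟨(m : ℕ) - 1, by omega⟩ else 0) := by
  rw [mulVec, dotProduct]
  by_cases hm : 1 ≤ (m : ℕ)
  · rw [dif_pos hm]
    have hrw : ∀ j : Fin N, Dmat N m j * x j
        = (if j = m then x j else 0)
          + (if j = (⟨(m : ℕ) - 1, by omega⟩ : Fin N) then -x j else 0) := by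
      intro j
      simp only [Dmat, Matrix.of_apply, Fin.ext_iff]
      split_ifs <;> first | ring1 | omega
    rw [Finset.sum_congr rfl fun j _ => hrw j, Finset.sum_add_distrib,
      Finset.sum_ite_eq' univ m x, Finset.sum_ite_eq' univ _ (fun j => -x j)]
    simp
    ring
  · rw [dif_neg hm]
    have hrw : ∀ j : Fin N, Dmat N m j * x j = (if j = m then x j else 0) := by
      intro j
      simp only [Dmat, Matrix.of_apply, Fin.ext_iff]
      split_ifs <;> first | ring1 | omega
    rw [Finset.sum_congr rfl fun j _ => hrw j, Finset.sum_ite_eq' univ m x]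
    simp

lemma DmatT_mulVec (x : Fin N → ℝ) (m : Fin N) :
    (Dmat N)ᵀ.mulVec x m
      = x m - (if h : (m : ℕ) + 1 < N then x ⟨(m : ℕ) + 1, h⟩ else 0) := by
  rw [mulVec, dotProduct]
  by_cases hm : (m : ℕ) + 1 < N
  · rw [dif_pos hm]
    have hrw : ∀ j : Fin N, (Dmat N)ᵀ m j * x j
        = (if j = m then x j else 0)
          + (if j = (⟨(m : ℕ) + 1, hm⟩ : Fin N) then -x j else 0) := by
      intro j
      simp only [Dmat, Matrix.transpose_apply, Matrix.of_apply, Fin.ext_iff]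
      split_ifs <;> first | ring1 | omega
    rw [Finset.sum_congr rfl fun j _ => hrw j, Finset.sum_add_distrib,
      Finset.sum_ite_eq' univ m x, Finset.sum_ite_eq' univ _ (fun j => -x j)]
    simp
    ring
  · rw [dif_neg hm]
    have hrw : ∀ j : Fin N, (Dmat N)ᵀ m j * x j = (if j = m then x j else 0) := by
      intro j
      simp only [Dmat, Matrix.transpose_apply, Matrix.of_apply, Fin.ext_iff]
      have := j.2
      split_ifs <;> first | ring1 | omega
    rw [Finset.sum_congr rfl fun j _ => hrw j, Finset.sum_ite_eq' univ m x]
    simp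

lemma pow_mulVec (j : ℕ) (x : Fin N → ℝ) (m : Fin N) :
    (Dmat N ^ j).mulVec x m = bdiff^[j] (ev N x) ((m : ℤ) + 1) := by
  induction j generalizing m with
  | zero => simp [Matrix.one_mulVec, ev_fin]
  | succ j ih =>
    rw [pow_succ', ← Matrix.mulVec_mulVec, Dmat_mulVec,
      Function.iterate_succ_apply']
    show _ = bdiff^[j] (ev N x) ((m:ℤ)+1) - bdiff^[j] (ev N x) ((m:ℤ)+1-1)
    by_cases hm : 1 ≤ (m : ℕ)
    · rw [dif_pos hm, ih, ih ⟨(m:ℕ)-1, by omega⟩]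
      have hidx : ((⟨(m:ℕ)-1, by omega⟩ : Fin N) : ℤ) + 1 = (m:ℤ) + 1 - 1 := by
        simp only []
        omega
      rw [hidx]
    · rw [dif_neg hm, ih]
      have h0 : ((m : ℤ) + 1 - 1) = 0 := by omega
      rw [h0, bdiff_iter_ev_nonpos x j 0 le_rfl]

lemma transpose_pow_mulVec (j : ℕ) (x : Fin N → ℝ) (m : Fin N) :
    ((Dmat N ^ j)ᵀ).mulVec x m = fdiff^[j] (ev N x) ((m : ℤ) + 1) := by
  induction j generalizing m with
  | zero => simp [Matrix.one_mulVec, ev_fin]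
  | succ j ih =>
    rw [pow_succ, Matrix.transpose_mul, ← Matrix.mulVec_mulVec, DmatT_mulVec,
      Function.iterate_succ_apply']
    show _ = fdiff^[j] (ev N x) ((m:ℤ)+1) - fdiff^[j] (ev N x) ((m:ℤ)+1+1)
    by_cases hm : (m : ℕ) + 1 < N
    · rw [dif_pos hm, ih, ih ⟨(m:ℕ)+1, hm⟩]
      have hidx : ((⟨(m:ℕ)+1, hm⟩ : Fin N) : ℤ) + 1 = (m:ℤ) + 1 + 1 := by
        simp only []
        omega
      rw [hidx]
    · rw [dif_neg hm, ih]
      have hlt : (N : ℤ) < (m : ℤ) + 1 + 1 := by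
        have := m.2; omega
      rw [fdiff_iter_ev_gt x j _ hlt]

end EigExt

namespace EigExt

open Finset

variable (r N : ℕ) (lam : ℝ) (v : Fin N → ℝ)

noncomputable def ext (hr : 0 < r) : ℕ → ℝ
  | n =>
    if h1 : n < r then 0
    else if h2 : n < r + N then v ⟨n - r, by omega⟩
    else if n < 2 * r + N then
      -∑ k ∈ (Finset.range r).attach,
        (-1 : ℝ) ^ ((k : ℕ) + 1) * (r.choose ((k : ℕ) + 1) : ℝ) * ext hr (n - ((k : ℕ) + 1))
    else
      (-1 : ℝ) ^ r * (lam * ext hr (n - r)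
        - ∑ k ∈ (Finset.range (2 * r)).attach,
            (-1 : ℝ) ^ ((k : ℕ) + r) * ((2 * r).choose (k : ℕ) : ℝ) * ext hr (n - 2 * r + (k : ℕ)))
  termination_by n => n
  decreasing_by
  · have := k.2; simp only [Finset.mem_range] at this; omega
  · omega
  · have := k.2; simp only [Finset.mem_range] at this; omega

noncomputable def bk (hr : 0 < r) : ℕ → ℝ
  | m =>
    (-1 : ℝ) ^ r * (lam * (if h : r ≤ m then bk hr (m - r) else ext r N lam v hr (r - m - 1))
      - ∑ k ∈ (Finset.range (2 * r)).attach,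
          (-1 : ℝ) ^ (((k : ℕ) + 1) + r) * ((2 * r).choose ((k : ℕ) + 1) : ℝ) *
            (if h : (k : ℕ) + 1 ≤ m then bk hr (m - ((k : ℕ) + 1))
             else ext r N lam v hr ((k : ℕ) - m)))
  termination_by m => m
  decreasing_by
  · omega
  · omega

noncomputable def vt (hr : 0 < r) : ℤ → ℝ := fun i =>
  if 1 - (r : ℤ) ≤ i then ext r N lam v hr (i + r - 1).toNat
  else bk r N lam v hr (-(i + r)).toNat

variable {r N lam v} (hr : 0 < r)

lemma ext_eq_vt (n : ℕ) : ext r N lam v hr n = vt r N lam v hr ((n : ℤ) + 1 - r) := by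
  rw [vt, if_pos (by omega)]
  congr 1
  omega

lemma bk_eq_vt (m : ℕ) : bk r N lam v hr m = vt r N lam v hr (-(r : ℤ) - m) := by
  rw [vt, if_neg (by omega)]
  congr 1
  omega

lemma vt_zero (i : ℤ) (h1 : 1 - (r : ℤ) ≤ i) (h2 : i ≤ 0) : vt r N lam v hr i = 0 := by
  rw [vt, if_pos h1, ext]
  rw [dif_pos (by omega)]

lemma vt_v (i : ℤ) (h1 : 1 ≤ i) (h2 : i ≤ (N : ℤ)) :
    vt r N lam v hr i = v ⟨(i - 1).toNat, by omega⟩ := by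
  rw [vt, if_pos (by omega), ext]
  rw [dif_neg (by omega), dif_pos (by omega)]
  congr 1
  ext
  simp only []
  omega

lemma vt_eq_ev (i : ℤ) (h1 : 1 - (r : ℤ) ≤ i) (h2 : i ≤ (N : ℤ)) :
    vt r N lam v hr i = ev N v i := by
  by_cases h : 1 ≤ i
  · rw [vt_v hr i h h2, ev, dif_pos ⟨h, h2⟩]
  · rw [vt_zero hr i h1 (by omega), ev_nonpos v i (by omega)]

lemma vt_boundary (i : ℤ) (h1 : (N : ℤ) + 1 ≤ i) (h2 : i ≤ (N : ℤ) + r) :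
    ∑ k ∈ Finset.range (r + 1),
      (-1 : ℝ) ^ k * (Nat.choose r k : ℝ) * vt r N lam v hr (i - k) = 0 := by
  have hVi : vt r N lam v hr i
      = -∑ k ∈ Finset.range r,
          (-1 : ℝ) ^ (k + 1) * (r.choose (k + 1) : ℝ) * vt r N lam v hr (i - ↑(k + 1)) := by
    rw [vt, if_pos (by omega), ext]
    rw [dif_neg (by omega), dif_neg (by omega), if_pos (by omega)]
    rw [← Finset.sum_attach (Finset.range r)
      (fun k => (-1 : ℝ) ^ (k + 1) * (r.choose (k + 1) : ℝ) * vt r N lam v hr (i - ↑(k + 1)))]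
    congr 1
    refine Finset.sum_congr rfl fun k _ => ?_
    have hk := k.2
    simp only [Finset.mem_range] at hk
    congr 1
    rw [ext_eq_vt hr]
    congr 1
    omega
  rw [Finset.sum_range_succ']
  have hf0 : (-1 : ℝ) ^ (0:ℕ) * (Nat.choose r 0 : ℝ) * vt r N lam v hr (i - ((0:ℕ):ℤ))
      = vt r N lam v hr i := by norm_num
  rw [hf0, hVi]
  exact add_neg_cancel _

lemma vt_rec_top (i : ℤ) (h1 : (N : ℤ) + 1 ≤ i) :
    ∑ k ∈ Finset.range (2 * r + 1),
      (-1 : ℝ) ^ (k + r) * (Nat.choose (2 * r) k : ℝ) * vt r N lam v hr (i - r + k)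
      = lam * vt r N lam v hr i := by
  have hVtop : vt r N lam v hr (i + r)
      = (-1 : ℝ) ^ r * (lam * vt r N lam v hr i
        - ∑ k ∈ Finset.range (2 * r),
            (-1 : ℝ) ^ (k + r) * ((2 * r).choose k : ℝ) * vt r N lam v hr (i - ↑r + ↑k)) := by
    rw [vt, if_pos (by omega), ext]
    rw [dif_neg (by omega), dif_neg (by omega), if_neg (by omega)]
    congr 2
    · rw [ext_eq_vt hr]
      congr 1
      congr 1
      omega
    · rw [← Finset.sum_attach (Finset.range (2 * r))
        (fun k => (-1 : ℝ) ^ (k + r) * ((2 * r).choose k : ℝ) * vt r N lam v hr (i - ↑r + ↑k))]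
      refine Finset.sum_congr rfl fun k _ => ?_
      have hk := k.2
      simp only [Finset.mem_range] at hk
      congr 1
      rw [ext_eq_vt hr]
      congr 1
      omega
  rw [Finset.sum_range_succ]
  have hlast : (-1 : ℝ) ^ (2 * r + r) * (Nat.choose (2 * r) (2 * r) : ℝ)
        * vt r N lam v hr (i - ↑r + ↑(2 * r))
      = (-1 : ℝ) ^ (2 * r + r) * vt r N lam v hr (i + r) := by
    rw [Nat.choose_self]
    have : i - (r : ℤ) + ↑(2 * r) = i + r := by push_cast; ring
    rw [this]
    norm_num
  rw [hlast, hVtop]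
  have hsign : (-1 : ℝ) ^ (2 * r + r) * (-1 : ℝ) ^ r = 1 := by
    rw [← pow_add]
    have h4 : 2 * r + r + r = 2 * (2 * r) := by ring
    rw [h4, pow_mul]
    norm_num
  linear_combination (lam * vt r N lam v hr i
    - ∑ k ∈ Finset.range (2 * r),
        (-1 : ℝ) ^ (k + r) * ((2 * r).choose k : ℝ) * vt r N lam v hr (i - ↑r + ↑k)) * hsign

lemma vt_rec_bot (i : ℤ) (h1 : i ≤ 0) :
    ∑ k ∈ Finset.range (2 * r + 1),
      (-1 : ℝ) ^ (k + r) * (Nat.choose (2 * r) k : ℝ) * vt r N lam v hr (i - r + k)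
      = lam * vt r N lam v hr i := by
  have hVbot : vt r N lam v hr (i - r)
      = (-1 : ℝ) ^ r * (lam * vt r N lam v hr i
        - ∑ k ∈ Finset.range (2 * r),
            (-1 : ℝ) ^ (k + 1 + r) * ((2 * r).choose (k + 1) : ℝ)
              * vt r N lam v hr (i - ↑r + ↑(k + 1))) := by
    rw [vt, if_neg (by omega), bk]
    congr 2
    · split_ifs with h
      · rw [bk_eq_vt hr]
        congr 1
        congr 1
        omega
      · rw [ext_eq_vt hr]
        congr 1
        congr 1
        omega
    · rw [← Finset.sum_attach (Finset.range (2 * r))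
        (fun k => (-1 : ℝ) ^ (k + 1 + r) * ((2 * r).choose (k + 1) : ℝ)
          * vt r N lam v hr (i - ↑r + ↑(k + 1)))]
      refine Finset.sum_congr rfl fun k _ => ?_
      have hk := k.2
      simp only [Finset.mem_range] at hk
      congr 1
      split_ifs with h
      · rw [bk_eq_vt hr]
        congr 1
        omega
      · rw [ext_eq_vt hr]
        congr 1
        omega
  rw [Finset.sum_range_succ']
  have hf0 : (-1 : ℝ) ^ ((0:ℕ) + r) * (Nat.choose (2 * r) 0 : ℝ)
        * vt r N lam v hr (i - ↑r + ((0:ℕ):ℤ))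
      = (-1 : ℝ) ^ r * vt r N lam v hr (i - r) := by norm_num
  rw [hf0, hVbot]
  have hsign : (-1 : ℝ) ^ r * (-1 : ℝ) ^ r = 1 := by
    rw [← pow_add]
    have h4 : r + r = 2 * r := by ring
    rw [h4, pow_mul]
    norm_num
  linear_combination (lam * vt r N lam v hr i
    - ∑ k ∈ Finset.range (2 * r),
        (-1 : ℝ) ^ (k + 1 + r) * ((2 * r).choose (k + 1) : ℝ)
          * vt r N lam v hr (i - ↑r + ↑(k + 1))) * hsign

lemma vt_rec_mid (hv : ((Dmat N ^ r)ᵀ * (Dmat N ^ r)).mulVec v = lam • v)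
    (i : ℤ) (hi1 : 1 ≤ i) (hi2 : i ≤ (N : ℤ)) :
    ∑ k ∈ Finset.range (2 * r + 1),
      (-1 : ℝ) ^ (k + r) * (Nat.choose (2 * r) k : ℝ) * vt r N lam v hr (i - r + k)
      = lam * vt r N lam v hr i := by
  have hN : 0 < N := by omega
  set w : Fin N → ℝ := (Dmat N ^ r).mulVec v with hw
  have hv2 : ∀ m : Fin N, fdiff^[r] (ev N w) ((m : ℤ) + 1) = lam * v m := by
    intro m
    have h := congrFun hv m
    rw [← Matrix.mulVec_mulVec, transpose_pow_mulVec] at h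
    simpa using h
  rw [key_identity]
  have hwin : ∀ k ∈ Finset.range (r + 1),
      bdiff^[r] (vt r N lam v hr) (i + k) = ev N w (i + k) := by
    intro k hk
    rw [Finset.mem_range] at hk
    set j := i + (k : ℤ) with hj
    have hj1 : 1 ≤ j := by omega
    by_cases hjN : j ≤ (N : ℤ)
    · have hm : ((⟨(j - 1).toNat, by omega⟩ : Fin N) : ℤ) + 1 = j := by
        simp only []
        omega
      have h1 : ev N w j = w ⟨(j - 1).toNat, by omega⟩ := by
        rw [ev, dif_pos ⟨hj1, hjN⟩]
      rw [h1, hw, pow_mulVec, hm]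
      apply bdiff_iter_congr
      intro l hl
      rw [Finset.mem_range] at hl
      exact vt_eq_ev hr (j - l) (by omega) (by omega)
    · have h0 : ev N w j = 0 := ev_gt w j (by omega)
      rw [h0, bdiff_iter_sum]
      exact vt_boundary hr j (by omega) (by omega)
  rw [fdiff_iter_congr r (bdiff^[r] (vt r N lam v hr)) (ev N w) i hwin]
  have hm : ((⟨(i - 1).toNat, by omega⟩ : Fin N) : ℤ) + 1 = i := by
    simp only []
    omega
  have hfin := hv2 ⟨(i - 1).toNat, by omega⟩
  rw [vt_v hr i hi1 hi2]
  exact (congrArg (fdiff^[r] (ev N w)) hm.symm).trans hfin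

end EigExt

/-- Any eigenvector `v` of `(Dʳ)ᵀDʳ` extends to a bi-infinite sequence `ṽ : ℤ → ℝ` that
vanishes on `{1-r,…,0}`, agrees with `v` on `{1,…,N}` (here `i : Fin N` encodes the math
index `i+1`), satisfies the order-`r` boundary conditions on `{N+1,…,N+r}`, and satisfies
the full recurrence `∑_{k=0}^{2r} (-1)^{k+r} C(2r,k) ṽ_{i-r+k} = λ ṽ_i` on all of `ℤ`. -/
theorem eigenvector_extension_to_recurrence (r N : ℕ) (hr : 0 < r) (h2r : 2 * r < N)
    (lam : ℝ) (v : Fin N → ℝ)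
    (hv : ((Dmat N ^ r)ᵀ * (Dmat N ^ r)).mulVec v = lam • v) :
    ∃ vt : ℤ → ℝ,
      (∀ i : ℤ, 1 - (r : ℤ) ≤ i → i ≤ 0 → vt i = 0) ∧
      (∀ i : Fin N, vt ((i : ℕ) + 1) = v i) ∧
      (∀ i : ℤ, (N : ℤ) + 1 ≤ i → i ≤ (N : ℤ) + r →
        ∑ k ∈ Finset.range (r + 1),
          (-1 : ℝ) ^ k * (Nat.choose r k : ℝ) * vt (i - k) = 0) ∧
      (∀ i : ℤ, ∑ k ∈ Finset.range (2 * r + 1),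
          (-1 : ℝ) ^ (k + r) * (Nat.choose (2 * r) k : ℝ) * vt (i - r + k) = lam * vt i) := by
  refine ⟨EigExt.vt r N lam v hr, ?_, ?_, ?_, ?_⟩
  · exact fun i h1 h2 => EigExt.vt_zero hr i h1 h2
  · intro i
    have hi2 : ((i : ℕ) : ℤ) + 1 ≤ (N : ℤ) := by
      have := i.2; omega
    rw [EigExt.vt_v hr _ (by omega) hi2]
    congr 1
    ext
    simp only []
    omega
  · exact fun i h1 h2 => EigExt.vt_boundary hr i h1 h2
  · intro i
    by_cases h1 : i ≤ 0
    · exact EigExt.vt_rec_bot hr i h1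
    · by_cases h2 : i ≤ (N : ℤ)
      · exact EigExt.vt_rec_mid hr hv i (by omega) h2
      · exact EigExt.vt_rec_top hr i (by omega)
end

section
/- Let r ≥ 2 be an integer and λ ∈ (0, 4^r) a real number, and let p(x) = (1−x)^{2r} − (−1)^r λ x^r. Then every root ρ ∈ ℂ of p satisfies (1+√2)^{−2} ≤ |ρ| ≤ (1+√2)² and (1+√2)^{−1} λ^{1/(2r)} ≤ |ρ − 1| ≤ (1+√2) λ^{1/(2r)}. Moreover, the two roots of the quadratic q₀(x) = −(1−x)² − λ^{1/r} x are distinct and both have modulus 1, while for each k ∈ {1,…,r−1} every root of the quadratic q_k(x) = −(1−x)² − λ^{1/r} e^{2kπi/r} x has modulus different from 1. -/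
/-!
For a root `ρ` of `p`, taking norms gives `|1 - ρ|² = μ |ρ|` with `μ = λ^{1/r} < 4`, so the
reverse triangle inequality yields `(1 - |ρ|)² ≤ 4 |ρ|`: `|ρ|` lies between the roots
`3 ∓ 2√2 = (1 + √2)^{∓2}` of `t² - 6t + 1`, and `|ρ - 1| = λ^{1/(2r)} √|ρ|` inherits the bounds.
The factor `q₀ = -(x² - (2 - μ)x + 1)` has real coefficients and negative discriminant, so its
roots are a pair of distinct conjugates with product `1`. If a root `ρ` of `q_k` lies on the unit
circle, multiplying `q_k(ρ) = 0` by `ρ̄ = ρ⁻¹` gives `μ e^{2kπi/r} = 2 - 2 Re ρ ≥ 0`, which forces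
`e^{2kπi/r} = 1`, i.e. `r ∣ k`.
-/

/-- The quadratic factor `q_k(x) = -(1-x)² - λ^{1/r} e^{2kπi/r} x` of
`p(x) = (1-x)^{2r} - (-1)^r λ x^r`. -/
noncomputable def qfac (r : ℕ) (lam : ℝ) (k : ℕ) (x : ℂ) : ℂ :=
  -(1 - x) ^ 2 -
    ((lam ^ ((r : ℝ)⁻¹) : ℝ) : ℂ) *
      Complex.exp (2 * (k : ℂ) * (Real.pi : ℂ) * Complex.I / (r : ℂ)) * x

open Complex ComplexConjugate

lemma one_add_sqrt_two_sq : (1 + √2) ^ 2 = 3 + 2 * √2 := by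
  nlinarith [Real.sq_sqrt (show (0 : ℝ) ≤ 2 by norm_num)]

lemma inv_one_add_sqrt_two_sq : ((1 + √2) ^ 2)⁻¹ = 3 - 2 * √2 := by
  rw [one_add_sqrt_two_sq, inv_eq_of_mul_eq_one_left]
  nlinarith [Real.sq_sqrt (show (0 : ℝ) ≤ 2 by norm_num)]

lemma mem_bounds_of_one_sub_sq_le_four_mul {a : ℝ} (h : (1 - a) ^ 2 ≤ 4 * a) :
    ((1 + √2) ^ 2)⁻¹ ≤ a ∧ a ≤ (1 + √2) ^ 2 := by
  have hs := Real.sq_sqrt (show (0 : ℝ) ≤ 2 by norm_num)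
  have hs0 := Real.sqrt_nonneg 2
  rw [inv_one_add_sqrt_two_sq, one_add_sqrt_two_sq]
  constructor <;> nlinarith [sq_nonneg (a - 3 + 2 * √2), sq_nonneg (a - 3 - 2 * √2)]

lemma mul_le_and_le_mul_of_sq_eq {a c s x : ℝ} (hc : 0 ≤ c) (hs : 0 ≤ s) (hx : 0 ≤ x)
    (hxa : x ^ 2 = s ^ 2 * a) (ha : (c ^ 2)⁻¹ ≤ a ∧ a ≤ c ^ 2) :
    c⁻¹ * s ≤ x ∧ x ≤ c * s := by
  constructor
  · rw [← pow_le_pow_iff_left₀ (by positivity) hx two_ne_zero, mul_pow, inv_pow, hxa, mul_comm]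
    exact mul_le_mul_of_nonneg_left ha.1 (sq_nonneg s)
  · rw [← pow_le_pow_iff_left₀ hx (by positivity) two_ne_zero, mul_pow, hxa, mul_comm (c ^ 2)]
    exact mul_le_mul_of_nonneg_left ha.2 (sq_nonneg s)

lemma norm_one_sub_sq_eq_of_root {r : ℕ} (hr : r ≠ 0) {lam : ℝ} (hlam : 0 < lam) {ρ : ℂ}
    (hρ : (1 - ρ) ^ (2 * r) - (-1) ^ r * (lam : ℂ) * ρ ^ r = 0) :
    ‖1 - ρ‖ ^ 2 = lam ^ ((r : ℝ)⁻¹) * ‖ρ‖ := by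
  have hnorm : (‖1 - ρ‖ ^ 2) ^ r = lam * ‖ρ‖ ^ r := by
    rw [← pow_mul, ← norm_pow, sub_eq_zero.mp hρ]
    simp [norm_pow, abs_of_pos hlam]
  rwa [← Real.rpow_inv_natCast_pow hlam.le hr, ← mul_pow,
    pow_left_inj₀ (by positivity) (by positivity) hr] at hnorm

lemma norm_bounds_of_root {r : ℕ} (hr : r ≠ 0) {lam : ℝ} (hlam0 : 0 < lam)
    (hlam4 : lam ^ ((r : ℝ)⁻¹) ≤ 4) {ρ : ℂ}
    (hρ : (1 - ρ) ^ (2 * r) - (-1) ^ r * (lam : ℂ) * ρ ^ r = 0) :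
    ((1 + √2) ^ 2)⁻¹ ≤ ‖ρ‖ ∧ ‖ρ‖ ≤ (1 + √2) ^ 2 ∧
      (1 + √2)⁻¹ * lam ^ ((2 * (r : ℝ))⁻¹) ≤ ‖ρ - 1‖ ∧
      ‖ρ - 1‖ ≤ (1 + √2) * lam ^ ((2 * (r : ℝ))⁻¹) := by
  have hsq := norm_one_sub_sq_eq_of_root hr hlam0 hρ
  have hbounds : ((1 + √2) ^ 2)⁻¹ ≤ ‖ρ‖ ∧ ‖ρ‖ ≤ (1 + √2) ^ 2 := by
    refine mem_bounds_of_one_sub_sq_le_four_mul (le_trans ?_ (hsq.trans_le ?_))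
    · simpa using pow_le_pow_left₀ (abs_nonneg _) (abs_norm_sub_norm_le 1 ρ) 2
    · exact mul_le_mul_of_nonneg_right hlam4 (norm_nonneg ρ)
  have hsqrt : (lam ^ ((2 * (r : ℝ))⁻¹)) ^ 2 = lam ^ ((r : ℝ)⁻¹) := by
    rw [← Real.rpow_mul_natCast hlam0.le]; ring_nf
  rw [norm_sub_rev]
  exact ⟨hbounds.1, hbounds.2, mul_le_and_le_mul_of_sq_eq (by positivity) (by positivity)
    (norm_nonneg _) (by rw [hsq, hsqrt]) hbounds⟩

lemma mul_conj_sub_eq (x z : ℂ) : (x - z) * (x - conj z) = x ^ 2 - 2 * z.re * x + normSq z := by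
  have hre := add_conj z
  push_cast at hre
  linear_combination -x * hre + mul_conj z

lemma exists_factor_of_sq_lt_four {b : ℝ} (hb : b ^ 2 < 4) :
    ∃ z : ℂ, ‖z‖ = 1 ∧ 0 < z.im ∧ ∀ x : ℂ, x ^ 2 - b * x + 1 = (x - z) * (x - conj z) := by
  have ht : 0 < 1 - (b / 2) ^ 2 := by nlinarith
  have hnormSq : (b / 2) ^ 2 + √(1 - (b / 2) ^ 2) ^ 2 = 1 := by
    rw [Real.sq_sqrt ht.le]; ring
  refine ⟨((b / 2 : ℝ) : ℂ) + (√(1 - (b / 2) ^ 2) : ℝ) * I, ?_, by simpa using ht, fun x => ?_⟩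
  · rw [norm_add_mul_I, hnormSq, Real.sqrt_one]
  · rw [mul_conj_sub_eq, normSq_add_mul_I, hnormSq]
    simp only [add_re, ofReal_re, re_ofReal_mul, I_re, mul_zero, add_zero]
    push_cast
    ring

lemma eq_one_of_root_of_norm_eq_one {μ : ℝ} (hμ : 0 < μ) {w ρ : ℂ} (hw : ‖w‖ = 1)
    (hρ : ‖ρ‖ = 1) (h : (1 - ρ) ^ 2 + μ * w * ρ = 0) : w = 1 := by
  have hρρ : ρ * conj ρ = 1 := by simp [mul_conj, normSq_eq_norm_sq, hρ]
  have hμw : (μ : ℂ) * w = ((2 - 2 * ρ.re : ℝ) : ℂ) := by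
    have hre := add_conj ρ
    push_cast at hre ⊢
    linear_combination conj ρ * h - (μ * w - 2 + ρ) * hρρ - hre
  have hre : 0 ≤ 2 - 2 * ρ.re := by linarith [hρ ▸ re_le_norm ρ]
  have hwreal : w = ((2 - 2 * ρ.re) / μ : ℝ) := by
    rw [ofReal_div, ← hμw, mul_div_cancel_left₀ _ (ofReal_ne_zero.2 hμ.ne')]
  rw [hwreal, norm_real, Real.norm_of_nonneg (by positivity)] at hw
  rw [hwreal, hw, ofReal_one]

section

variable {r : ℕ} {lam : ℝ}

lemma qfac_zero (x : ℂ) : qfac r lam 0 x = -(x ^ 2 - (2 - lam ^ ((r : ℝ)⁻¹) : ℝ) * x + 1) := by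
  simp only [qfac, CharP.cast_eq_zero, mul_zero, zero_mul, zero_div, Complex.exp_zero]
  push_cast
  ring

lemma qfac_eq (k : ℕ) (x : ℂ) :
    qfac r lam k x = -((1 - x) ^ 2 +
      (lam ^ ((r : ℝ)⁻¹) : ℝ) * exp (2 * Real.pi * I / r) ^ k * x) := by
  rw [qfac, ← exp_nat_mul]
  ring_nf

end

/-- Every root `ρ` of `p(x) = (1-x)^{2r} - (-1)^r λ x^r` satisfies
`(1+√2)⁻² ≤ |ρ| ≤ (1+√2)²` and `(1+√2)⁻¹ λ^{1/(2r)} ≤ |ρ-1| ≤ (1+√2) λ^{1/(2r)}`.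
The two roots of `q₀` are distinct and have modulus `1`, while for `1 ≤ k ≤ r-1` every root
of `q_k` has modulus different from `1`. -/
theorem root_modulus_bounds
    (r : ℕ) (hr : 2 ≤ r) (lam : ℝ) (hlam0 : 0 < lam) (hlam4 : lam < 4 ^ r) :
    (∀ ρ : ℂ, (1 - ρ) ^ (2 * r) - (-1) ^ r * (lam : ℂ) * ρ ^ r = 0 →
      ((1 + Real.sqrt 2) ^ 2)⁻¹ ≤ ‖ρ‖ ∧
      ‖ρ‖ ≤ (1 + Real.sqrt 2) ^ 2 ∧
      (1 + Real.sqrt 2)⁻¹ * lam ^ ((2 * (r : ℝ))⁻¹) ≤ ‖ρ - 1‖ ∧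
      ‖ρ - 1‖ ≤ (1 + Real.sqrt 2) * lam ^ ((2 * (r : ℝ))⁻¹)) ∧
    (∃ ρ₁ ρ₂ : ℂ, ρ₁ ≠ ρ₂ ∧ qfac r lam 0 ρ₁ = 0 ∧ qfac r lam 0 ρ₂ = 0) ∧
    (∀ ρ : ℂ, qfac r lam 0 ρ = 0 → ‖ρ‖ = 1) ∧
    (∀ k : ℕ, 1 ≤ k → k ≤ r - 1 → ∀ ρ : ℂ, qfac r lam k ρ = 0 → ‖ρ‖ ≠ 1) := by
  have hr0 : r ≠ 0 := by omega
  set μ := lam ^ ((r : ℝ)⁻¹) with hμ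
  have hμ0 : 0 < μ := Real.rpow_pos_of_pos hlam0 _
  have hμ4 : μ < 4 := by
    rwa [← pow_lt_pow_iff_left₀ hμ0.le (by norm_num) hr0, Real.rpow_inv_natCast_pow hlam0.le hr0]
  obtain ⟨z, hz, hzim, hfac⟩ := exists_factor_of_sq_lt_four (b := 2 - μ) (by nlinarith)
  refine ⟨fun ρ hρ => norm_bounds_of_root hr0 hlam0 hμ4.le hρ, ⟨z, conj z, ?_, ?_, ?_⟩,
    fun ρ hρ => ?_, fun k hk1 hkr ρ hρ hρ1 => ?_⟩
  · intro h
    have him := congrArg im h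
    simp only [conj_im] at him
    linarith
  · rw [qfac_zero, ← hμ, hfac, sub_self, zero_mul, neg_zero]
  · rw [qfac_zero, ← hμ, hfac, sub_self, mul_zero, neg_zero]
  · rw [qfac_zero, ← hμ, neg_eq_zero, hfac, mul_eq_zero, sub_eq_zero, sub_eq_zero] at hρ
    rcases hρ with rfl | rfl <;> simpa using hz
  · rw [qfac_eq, neg_eq_zero] at hρ
    have hζ := Complex.isPrimitiveRoot_exp r hr0
    have hk : r ∣ k := (hζ.pow_eq_one_iff_dvd k).1 <|
      eq_one_of_root_of_norm_eq_one hμ0 (by rw [norm_pow, hζ.norm'_eq_one hr0, one_pow]) hρ1 hρ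
    exact absurd (Nat.le_of_dvd (by omega) hk) (by omega)
end

section
/- Let r ≥ 2 be an integer and λ ∈ (0, 4^r) a real number. Then the polynomial p(x) = (1−x)^{2r} − (−1)^r λ x^r has 2r distinct complex roots; that is, every root of p has multiplicity one (equivalently, p is squarefree over ℂ). -/
/-!
Write `p = (1 - X)^(2r) - c X^r` with `c = (-1)^r λ`. At a multiple root `a` both `p(a)` and
`a p'(a) = -r (2a (1 - a)^(2r-1) + c a^r)` vanish; substituting `c a^r = (1 - a)^(2r)` gives
`r (1 - a)^(2r-1) (1 + a) = 0`. Since `c ≠ 0`, `a = 1` is not a root, so `a = -1`, and then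
`p(-1) = 4^r - (-1)^r c = 0` forces `λ = 4^r`. Hence `p` is separable, and over `ℂ` its `2r` roots
are distinct.
-/

open Polynomial

section
variable {R : Type*} [CommRing R]

noncomputable def charPoly (r : ℕ) (c : R) : R[X] := (1 - X) ^ (2 * r) - C c * X ^ r

theorem eval_charPoly (r : ℕ) (c a : R) :
    (charPoly r c).eval a = (1 - a) ^ (2 * r) - c * a ^ r := by
  simp [charPoly]

theorem map_charPoly {S : Type*} [CommRing S] (f : R →+* S) (r : ℕ) (c : R) :
    (charPoly r c).map f = charPoly r (f c) := by
  simp [charPoly]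

theorem natDegree_charPoly [IsDomain R] {r : ℕ} (hr : r ≠ 0) (c : R) :
    (charPoly r c).natDegree = 2 * r := by
  have h : ((1 - X : R[X]) ^ (2 * r)).natDegree = 2 * r := by
    rw [natDegree_pow, ← C_1, ← neg_sub, natDegree_neg, natDegree_X_sub_C, mul_one]
  have hlt : (C c * X ^ r).natDegree < 2 * r :=
    (natDegree_C_mul_le _ _).trans_lt (by rw [natDegree_X_pow]; omega)
  rw [charPoly, natDegree_sub_eq_left_of_natDegree_lt (by rwa [h]), h]

theorem eval_derivative_charPoly (n : ℕ) (c a : R) :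
    (derivative (charPoly (n + 1) c)).eval a =
      -((n + 1) * (2 * (1 - a) ^ (2 * n + 1) + c * a ^ n)) := by
  simp [charPoly, derivative_pow, show 2 * (n + 1) - 1 = 2 * n + 1 by omega]
  ring

theorem eval_neg_one_charPoly (r : ℕ) (c : R) :
    (charPoly r c).eval (-1) = 4 ^ r - c * (-1) ^ r := by
  rw [eval_charPoly, pow_mul]
  norm_num

theorem eq_neg_four_pow_of_isRoot_charPoly_neg_one {r : ℕ} {c : R}
    (h : (charPoly r c).IsRoot (-1)) : c = (-4) ^ r := by
  rw [IsRoot, eval_neg_one_charPoly, sub_eq_zero] at h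
  calc c = c * ((-1) ^ r * (-1) ^ r) := by rw [← mul_pow]; simp
    _ = (-4) ^ r := by rw [← mul_assoc, ← h, ← mul_pow]; norm_num

theorem eq_neg_one_of_isRoot_charPoly_of_isRoot_derivative [IsDomain R] {r : ℕ}
    (hr : (r : R) ≠ 0) {c a : R} (hc : c ≠ 0) (hroot : (charPoly r c).IsRoot a)
    (hroot' : (derivative (charPoly r c)).IsRoot a) : a = -1 := by
  obtain ⟨n, rfl⟩ : ∃ n, r = n + 1 := Nat.exists_eq_succ_of_ne_zero (by rintro rfl; simp at hr)
  rw [IsRoot, eval_charPoly] at hroot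
  rw [IsRoot, eval_derivative_charPoly] at hroot'
  have ha : 1 - a ≠ 0 := by
    intro h
    obtain rfl : a = 1 := by linear_combination -h
    simp [hc] at hroot
  have hfactor : ((n + 1 : ℕ) : R) * (1 - a) ^ (2 * n + 1) * (1 + a) = 0 := by
    push_cast
    linear_combination (n + 1 : R) * hroot - a * hroot'
  linear_combination (mul_eq_zero.mp hfactor).resolve_left (mul_ne_zero hr (pow_ne_zero _ ha))

end

/-- Coprimality of `p` and `p'` is tested at the points of every domain `A` containing `K`. -/
theorem separable_charPoly {K : Type*} [Field K] {r : ℕ} (hr : (r : K) ≠ 0) {c : K}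
    (hc : c ≠ 0) (hc4 : c ≠ (-4) ^ r) : (charPoly r c).Separable := by
  rw [separable_def, isCoprime_iff_aeval_ne_zero]
  intro A _ _ _ a
  have hinj := (algebraMap K A).injective
  rw [aeval_def, eval₂_eq_eval_map, aeval_def, eval₂_eq_eval_map, ← derivative_map, map_charPoly]
  by_contra! h
  have ha := eq_neg_one_of_isRoot_charPoly_of_isRoot_derivative
    (by rwa [← map_natCast (algebraMap K A), hinj.ne_iff' (map_zero _)])
    (by rwa [hinj.ne_iff' (map_zero _)]) h.1 h.2
  subst ha
  apply hc4
  apply hinj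
  rw [map_pow, map_neg, map_ofNat]
  exact eq_neg_four_pow_of_isRoot_charPoly_neg_one h.1

/-- For `r ≥ 2` and `λ ∈ (0, 4^r)`, the polynomial `p(X) = (1-X)^{2r} - (-1)^r λ X^r`
is squarefree over `ℂ` and has `2r` distinct complex roots (all of multiplicity one). -/
theorem charPoly_has_distinct_roots
    (r : ℕ) (hr : 2 ≤ r) (lam : ℝ) (hlam0 : 0 < lam) (hlam4 : lam < 4 ^ r) :
    Squarefree ((1 - X) ^ (2 * r) - C ((-1) ^ r * (lam : ℂ)) * X ^ r) ∧
    ((1 - X) ^ (2 * r) - C ((-1) ^ r * (lam : ℂ)) * X ^ r).roots.card = 2 * r ∧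
    ((1 - X) ^ (2 * r) - C ((-1) ^ r * (lam : ℂ)) * X ^ r).roots.Nodup := by
  have hc0 : (-1) ^ r * (lam : ℂ) ≠ 0 := by simp [hlam0.ne']
  have hc4 : (-1) ^ r * (lam : ℂ) ≠ (-4) ^ r := by
    rw [show (-4 : ℂ) = -1 * 4 by norm_num, mul_pow, Ne,
      mul_right_inj' (pow_ne_zero _ (by norm_num))]
    exact_mod_cast hlam4.ne
  have hsep : (charPoly r ((-1) ^ r * (lam : ℂ))).Separable :=
    separable_charPoly (by norm_cast; omega) hc0 hc4
  exact ⟨hsep.squarefree,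
    IsAlgClosed.card_roots_eq_natDegree.trans (natDegree_charPoly (by omega) _),
    nodup_roots hsep⟩
end

section
/- There exist absolute constants c, C > 0 (independent of N, r, λ) such that the following holds. Let r ≥ 2 be an integer, λ ∈ (0, 4^r), and let ρ, ρ̃ ∈ ℂ be two roots of p(x) = (1−x)^{2r} − (−1)^r λ x^r such that ρ̃ is none of ρ, the complex conjugate of ρ, ρ^{−1}, or the complex conjugate of ρ^{−1}. Then c r^{−2} λ^{1/(2r)} ≤ | |ρ̃| − |ρ| | ≤ C λ^{1/(2r)}. -/
/-!
Write `m = λ^(1/r)`. A root `ρ` satisfies `(2 - ρ - ρ⁻¹)^r = λ`, so `ρ + ρ⁻¹ = 2 - m ω` for an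
`r`-th root of unity `ω`, and the Joukowski identity
`‖ρ‖ + ‖ρ‖⁻¹ = (‖ρ + ρ⁻¹ + 2‖ + ‖ρ + ρ⁻¹ - 2‖) / 2` shows that `‖ρ‖` depends only on `Re ω`.
The roots sharing `Re ω` with `ρ` are among `ρ`, `conj ρ`, `ρ⁻¹`, `conj ρ⁻¹`. Real parts of distinct
`r`-th roots of unity differ by at least `8 / r²` (product formula for `cos a - cos b` and
Jordan's inequality), and moving `Re ω` by `δ` moves `‖ρ‖ + ‖ρ‖⁻¹` by at least `m δ / 4`. As
`‖ρ‖` lies within `3 √m` of `1`, where `x ↦ x + x⁻¹` has slope `O(√m)`, `‖ρ‖` itself moves by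
`≫ √m δ`; the same closeness to `1` gives the upper bound.
-/

open Real ComplexConjugate

theorem two_div_le_abs_sin_pi_mul_div {n : ℤ} {r : ℕ} (h : sin (π * n / r) ≠ 0) :
    2 / r ≤ |sin (π * n / r)| := by
  have hr : (0 : ℝ) < r := Nat.cast_pos.mpr (Nat.pos_of_ne_zero fun hr => by simp [hr] at h)
  -- the residue `e` of `n` of least absolute value mod `r` puts the angle in `[-π/2, π/2]`
  set q : ℤ := round ((n : ℝ) / r)
  set e : ℤ := n - q * r
  have he : (e : ℝ) / r = n / r - q := by
    simp only [e]; push_cast; field_simp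
  have hsplit : π * n / r = π * e / r + q * π := by
    rw [mul_div_assoc, mul_div_assoc, he]; ring
  have he0 : e ≠ 0 := by
    rintro he0
    simp [hsplit, he0] at h
  have hle : |π * e / r| ≤ π / 2 := by
    rw [mul_div_assoc, abs_mul, abs_of_pos pi_pos, he]
    nlinarith [abs_sub_round ((n : ℝ) / r), pi_pos]
  calc 2 / r ≤ 2 / π * |π * e / r| := by
        rw [abs_div, abs_mul, abs_of_pos pi_pos, abs_of_pos hr]
        field_simp
        exact_mod_cast Int.one_le_abs he0
    _ ≤ sin |π * e / r| := mul_le_sin (abs_nonneg _) hle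
    _ = |sin (π * e / r)| := (abs_sin_eq_sin_abs_of_abs_le_pi (by linarith [pi_pos])).symm
    _ = |sin (π * n / r)| := by simp [hsplit, sin_add_int_mul_pi, abs_mul]

theorem eight_div_sq_le_abs_cos_sub_cos {j k : ℤ} {r : ℕ}
    (h : cos (2 * π * j / r) ≠ cos (2 * π * k / r)) :
    8 / r ^ 2 ≤ |cos (2 * π * j / r) - cos (2 * π * k / r)| := by
  have hprod : cos (2 * π * j / r) - cos (2 * π * k / r) =
      -2 * sin (π * ((j + k : ℤ) : ℝ) / r) * sin (π * ((j - k : ℤ) : ℝ) / r) := by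
    rw [cos_sub_cos]; push_cast; ring_nf
  rw [← sub_ne_zero, hprod] at h
  rw [hprod, abs_mul, abs_mul, abs_neg, abs_two]
  have h1 := two_div_le_abs_sin_pi_mul_div (left_ne_zero_of_mul h |> right_ne_zero_of_mul)
  have h2 := two_div_le_abs_sin_pi_mul_div (right_ne_zero_of_mul h)
  calc 8 / (r : ℝ) ^ 2 = 2 * (2 / r) * (2 / r) := by ring
    _ ≤ _ := by gcongr

theorem eq_or_eq_inv_of_add_inv_eq {K : Type*} [Field K] {a b : K} (ha : a ≠ 0) (hb : b ≠ 0)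
    (h : b + b⁻¹ = a + a⁻¹) : b = a ∨ b = a⁻¹ := by
  have hfac : (b - a) * (a * b - 1) = 0 := by
    field_simp at h
    linear_combination h
  rcases mul_eq_zero.mp hfac with h | h
  · exact Or.inl (sub_eq_zero.mp h)
  · exact Or.inr (eq_inv_of_mul_eq_one_right (sub_eq_zero.mp h))

theorem add_inv_sub_add_inv {K : Type*} [Field K] {x y : K} (hx : x ≠ 0) (hy : y ≠ 0) :
    (y + y⁻¹) - (x + x⁻¹) = (y - x) * (x * y - 1) / (x * y) := by
  field_simp; ring

theorem abs_sub_one_le_of_add_inv_le {x m : ℝ} (hx : 0 < x) (hm : m ≤ 4)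
    (h : x + x⁻¹ ≤ 2 + m) : |x - 1| ≤ 3 * √m := by
  have hsq : (x - 1) ^ 2 = x * (x + x⁻¹ - 2) := by field_simp; ring
  have hx6 : x ≤ 6 := by linarith [inv_pos.mpr hx]
  have hm0 : 0 ≤ m := by nlinarith [sq_nonneg (x - 1)]
  refine abs_le_of_sq_le_sq ?_ (by positivity)
  rw [mul_pow, sq_sqrt hm0, hsq]
  nlinarith

theorem abs_add_inv_sub_add_inv_le {x y m : ℝ} (hx : 0 < x) (hy : 0 < y) (hm : m ≤ 4)
    (hxm : x + x⁻¹ ≤ 2 + m) (hym : y + y⁻¹ ≤ 2 + m) :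
    |(y + y⁻¹) - (x + x⁻¹)| ≤ 756 * √m * |y - x| := by
  have hx1 := abs_sub_one_le_of_add_inv_le hx hm hxm
  have hy1 := abs_sub_one_le_of_add_inv_le hy hm hym
  have hx6 : x ≤ 6 := by linarith [inv_pos.mpr hx]
  have hxy : 36⁻¹ ≤ x * y := by
    have hx' : x⁻¹ ≤ 6 := by linarith
    have hy' : y⁻¹ ≤ 6 := by linarith
    rw [inv_le_comm₀ (by norm_num) (by positivity), mul_inv]
    nlinarith [inv_pos.mpr hx, inv_pos.mpr hy]
  have hnum : |x * y - 1| ≤ 21 * √m := by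
    calc |x * y - 1| = |x * (y - 1) + (x - 1)| := by ring_nf
      _ ≤ x * |y - 1| + |x - 1| := by
          grw [abs_add_le, abs_mul, abs_of_pos hx]
      _ ≤ 6 * (3 * √m) + 3 * √m := by gcongr
      _ = 21 * √m := by ring
  rw [add_inv_sub_add_inv hx.ne' hy.ne', abs_div, abs_mul, abs_of_pos (by positivity : 0 < x * y),
    div_le_iff₀ (by positivity)]
  calc |y - x| * |x * y - 1| ≤ |y - x| * (21 * √m) := by gcongr
    _ = 756 * √m * |y - x| * 36⁻¹ := by ring
    _ ≤ 756 * √m * |y - x| * (x * y) := by gcongr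

namespace Complex

theorem exists_re_eq_cos_of_pow_eq_one {ω : ℂ} {r : ℕ} (hr : r ≠ 0) (h : ω ^ r = 1) :
    ∃ k : ℕ, ω.re = Real.cos (2 * π * k / r) := by
  have : NeZero r := ⟨hr⟩
  obtain ⟨k, -, rfl⟩ := (isPrimitiveRoot_exp r hr).eq_pow_of_pow_eq_one h
  refine ⟨k, ?_⟩
  rw [← exp_nat_mul, ← exp_ofReal_mul_I_re]
  congr 2
  push_cast
  ring

theorem eight_div_sq_le_abs_re_sub_re {ω ω' : ℂ} {r : ℕ} (hr : r ≠ 0)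
    (hω : ω ^ r = 1) (hω' : ω' ^ r = 1) (hne : ω.re ≠ ω'.re) :
    8 / r ^ 2 ≤ |ω.re - ω'.re| := by
  obtain ⟨j, hj⟩ := exists_re_eq_cos_of_pow_eq_one hr hω
  obtain ⟨k, hk⟩ := exists_re_eq_cos_of_pow_eq_one hr hω'
  rw [hj, hk] at hne ⊢
  exact_mod_cast eight_div_sq_le_abs_cos_sub_cos (j := j) (k := k) (by exact_mod_cast hne)

theorem eq_or_eq_conj_of_re_eq_of_norm_eq {u v : ℂ} (hre : v.re = u.re)
    (hnorm : ‖v‖ = ‖u‖) : v = u ∨ v = conj u := by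
  have him : v.im * v.im = u.im * u.im := by
    have := congrArg (· ^ 2) hnorm
    simp only [Complex.sq_norm, normSq_apply, hre] at this
    linarith
  rcases mul_self_eq_mul_self_iff.mp him with h | h
  · exact Or.inl (ext hre h)
  · exact Or.inr (ext (by simpa using hre) (by simpa using h))

-- `ρ ↦ ρ + ρ⁻¹` maps the circle `‖ρ‖ = R` onto the ellipse with foci `±2` and major axis
-- `R + R⁻¹`.
theorem norm_add_inv_norm {ρ : ℂ} (hρ : ρ ≠ 0) :
    ‖ρ‖ + ‖ρ‖⁻¹ = (‖ρ + ρ⁻¹ + 2‖ + ‖ρ + ρ⁻¹ - 2‖) / 2 := by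
  have hplus : ‖ρ‖ * ‖ρ + ρ⁻¹ + 2‖ = ‖ρ + 1‖ ^ 2 := by
    rw [← norm_mul, ← norm_pow]; congr 1; field_simp; ring
  have hminus : ‖ρ‖ * ‖ρ + ρ⁻¹ - 2‖ = ‖ρ - 1‖ ^ 2 := by
    rw [← norm_mul, ← norm_pow]; congr 1; field_simp; ring
  have hpar := parallelogram_law_with_norm ℝ ρ 1
  have hpos : 0 < ‖ρ‖ := norm_pos_iff.mpr hρ
  rw [norm_one] at hpar
  rw [show ‖ρ‖ + ‖ρ‖⁻¹ = (‖ρ‖ ^ 2 + 1) / ‖ρ‖ by field_simp, div_eq_div_iff hpos.ne' two_ne_zero]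
  linear_combination -hpar - hplus - hminus

theorem norm_four_sub_mul_le {m : ℝ} {ω : ℂ} (hm : 0 ≤ m) (hω : ‖ω‖ = 1) :
    ‖4 - m * ω‖ ≤ 4 + m := by
  grw [norm_sub_le, norm_mul, hω, norm_real, Real.norm_of_nonneg hm]
  norm_num

theorem norm_four_sub_mul_sq {m : ℝ} {ω : ℂ} (hω : ‖ω‖ = 1) :
    ‖4 - m * ω‖ ^ 2 = 16 - 8 * m * ω.re + m ^ 2 := by
  have h1 : ω.re * ω.re + ω.im * ω.im = 1 := by
    rw [← normSq_apply, ← Complex.sq_norm, hω, one_pow]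
  rw [Complex.sq_norm, normSq_apply]
  simp only [sub_re, sub_im, mul_re, mul_im, ofReal_re, ofReal_im]
  norm_num
  linear_combination m ^ 2 * h1

theorem mul_abs_re_sub_re_le {m : ℝ} {ω ω' : ℂ} (hm : 0 ≤ m) (hm4 : m ≤ 4) (hω : ‖ω‖ = 1)
    (hω' : ‖ω'‖ = 1) : m * |ω'.re - ω.re| ≤ 2 * |‖4 - m * ω'‖ - ‖4 - m * ω‖| := by
  have hsum : ‖4 - m * ω'‖ + ‖4 - m * ω‖ ≤ 16 := by
    linarith [norm_four_sub_mul_le hm hω, norm_four_sub_mul_le hm hω']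
  have hdiff : 8 * m * (ω'.re - ω.re) =
      (‖4 - m * ω‖ - ‖4 - m * ω'‖) * (‖4 - m * ω‖ + ‖4 - m * ω'‖) := by
    linear_combination norm_four_sub_mul_sq hω' - norm_four_sub_mul_sq hω
  have : 8 * (m * |ω'.re - ω.re|) ≤ |‖4 - m * ω'‖ - ‖4 - m * ω‖| * 16 := by
    calc 8 * (m * |ω'.re - ω.re|) = |8 * m * (ω'.re - ω.re)| := by
          rw [abs_mul, abs_mul, abs_of_nonneg hm]; norm_num; ring
      _ = |‖4 - m * ω'‖ - ‖4 - m * ω‖| * (‖4 - m * ω‖ + ‖4 - m * ω'‖) := by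
          rw [hdiff, abs_mul, abs_sub_comm,
            abs_of_nonneg (add_nonneg (norm_nonneg _) (norm_nonneg _))]
      _ ≤ |‖4 - m * ω'‖ - ‖4 - m * ω‖| * 16 := by gcongr; linarith
  linarith

end Complex

section RootsOfAddInv

variable {m : ℝ} {ρ ρt ω ω' : ℂ}

theorem norm_add_inv_norm_eq_of_add_inv_eq (hρ : ρ ≠ 0) (hm : 0 ≤ m) (hω : ‖ω‖ = 1)
    (h : ρ + ρ⁻¹ = 2 - m * ω) : ‖ρ‖ + ‖ρ‖⁻¹ = (‖4 - m * ω‖ + m) / 2 := by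
  rw [Complex.norm_add_inv_norm hρ, h, show (2 : ℂ) - m * ω + 2 = 4 - m * ω by ring,
    show (2 : ℂ) - m * ω - 2 = -(m * ω) by ring, norm_neg, norm_mul, hω, Complex.norm_real,
    Real.norm_of_nonneg hm]
  norm_num

theorem norm_add_inv_norm_le_of_add_inv_eq (hρ : ρ ≠ 0) (hm : 0 ≤ m) (hω : ‖ω‖ = 1)
    (h : ρ + ρ⁻¹ = 2 - m * ω) : ‖ρ‖ + ‖ρ‖⁻¹ ≤ 2 + m := by
  rw [norm_add_inv_norm_eq_of_add_inv_eq hρ hm hω h]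
  linarith [Complex.norm_four_sub_mul_le hm hω]

theorem abs_norm_sub_one_le_of_add_inv_eq (hρ : ρ ≠ 0) (hm : 0 ≤ m) (hm4 : m ≤ 4)
    (hω : ‖ω‖ = 1) (h : ρ + ρ⁻¹ = 2 - m * ω) : |‖ρ‖ - 1| ≤ 3 * √m :=
  abs_sub_one_le_of_add_inv_le (norm_pos_iff.mpr hρ) hm4
    (norm_add_inv_norm_le_of_add_inv_eq hρ hm hω h)

theorem sqrt_mul_abs_re_sub_re_le_of_add_inv_eq (hρ : ρ ≠ 0) (hρt : ρt ≠ 0) (hm : 0 < m)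
    (hm4 : m ≤ 4) (hω : ‖ω‖ = 1) (hω' : ‖ω'‖ = 1) (h : ρ + ρ⁻¹ = 2 - m * ω)
    (ht : ρt + ρt⁻¹ = 2 - m * ω') : √m * |ω'.re - ω.re| ≤ 3024 * |‖ρt‖ - ‖ρ‖| := by
  have hre := Complex.mul_abs_re_sub_re_le hm.le hm4 hω hω'
  have hnorms : ‖4 - m * ω'‖ - ‖4 - m * ω‖ = 2 * ((‖ρt‖ + ‖ρt‖⁻¹) - (‖ρ‖ + ‖ρ‖⁻¹)) := by
    rw [norm_add_inv_norm_eq_of_add_inv_eq hρ hm.le hω h,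
      norm_add_inv_norm_eq_of_add_inv_eq hρt hm.le hω' ht]
    ring
  rw [hnorms, abs_mul, abs_two] at hre
  have hslope := abs_add_inv_sub_add_inv_le (norm_pos_iff.mpr hρ) (norm_pos_iff.mpr hρt) hm4
    (norm_add_inv_norm_le_of_add_inv_eq hρ hm.le hω h)
    (norm_add_inv_norm_le_of_add_inv_eq hρt hm.le hω' ht)
  refine le_of_mul_le_mul_left ?_ (sqrt_pos.mpr hm)
  calc √m * (√m * |ω'.re - ω.re|) = m * |ω'.re - ω.re| := by
        rw [← mul_assoc, mul_self_sqrt hm.le]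
    _ ≤ √m * (3024 * |‖ρt‖ - ‖ρ‖|) := by linarith

theorem re_ne_re_of_add_inv_eq (hρ : ρ ≠ 0) (hρt : ρt ≠ 0)
    (h : ρ + ρ⁻¹ = 2 - m * ω) (ht : ρt + ρt⁻¹ = 2 - m * ω') (hnorm : ‖ω'‖ = ‖ω‖)
    (hne : ρt ≠ ρ) (hne_conj : ρt ≠ conj ρ) (hne_inv : ρt ≠ ρ⁻¹)
    (hne_conj_inv : ρt ≠ conj ρ⁻¹) : ω'.re ≠ ω.re := by
  intro hre
  rcases Complex.eq_or_eq_conj_of_re_eq_of_norm_eq hre hnorm with rfl | rfl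
  · rcases eq_or_eq_inv_of_add_inv_eq hρ hρt (ht.trans h.symm) with h | h
    exacts [hne h, hne_inv h]
  · have hconj : ρt + ρt⁻¹ = conj ρ + (conj ρ)⁻¹ := by
      rw [ht, ← map_inv₀, ← map_add, h]; simp [map_ofNat]
    rcases eq_or_eq_inv_of_add_inv_eq ((map_ne_zero _).mpr hρ) hρt hconj with h | h
    exacts [hne_conj h, hne_conj_inv (h.trans (map_inv₀ _ _).symm)]

end RootsOfAddInv

theorem exists_add_inv_eq_of_root {r : ℕ} (hr : r ≠ 0) {lam : ℝ} (hlam : 0 < lam) {ρ : ℂ}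
    (hρ : (1 - ρ) ^ (2 * r) - (-1) ^ r * (lam : ℂ) * ρ ^ r = 0) :
    ρ ≠ 0 ∧ ∃ ω : ℂ, ω ^ r = 1 ∧ ρ + ρ⁻¹ = 2 - (lam ^ (r : ℝ)⁻¹ : ℝ) * ω := by
  have hρ0 : ρ ≠ 0 := by rintro rfl; simp [hr] at hρ
  set m : ℝ := lam ^ (r : ℝ)⁻¹
  have hm : (m : ℂ) ^ r = lam := by
    exact_mod_cast Real.rpow_inv_natCast_pow hlam.le hr
  have hm0 : (m : ℂ) ≠ 0 := by exact_mod_cast (Real.rpow_pos_of_pos hlam _).ne'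
  have hpow : (2 - (ρ + ρ⁻¹)) ^ r = lam := by
    have hsq : ρ * (2 - (ρ + ρ⁻¹)) = -(1 - ρ) ^ 2 := by field_simp; ring
    refine mul_left_cancel₀ (pow_ne_zero r hρ0) ?_
    have hsign : ((-1 : ℂ) ^ r) ^ 2 = 1 := by rw [← pow_mul, mul_comm, pow_mul]; simp
    rw [← mul_pow, hsq, neg_pow, ← pow_mul]
    linear_combination (-1) ^ r * hρ + (lam : ℂ) * ρ ^ r * hsign
  refine ⟨hρ0, (2 - (ρ + ρ⁻¹)) / m, ?_, by field_simp; ring⟩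
  rw [div_pow, hpow, hm, div_self (by exact_mod_cast hlam.ne')]

/-- There exist absolute constants `c, C > 0` such that for any `r ≥ 2`, `λ ∈ (0, 4^r)`, and
roots `ρ, ρ̃` of `p(x) = (1-x)^{2r} - (-1)^r λ x^r` with `ρ̃` none of `ρ`, `conj ρ`, `ρ⁻¹`,
`conj (ρ⁻¹)`, one has `c r⁻² λ^{1/(2r)} ≤ ||ρ̃| - |ρ|| ≤ C λ^{1/(2r)}`. -/
theorem root_modulus_gap_bounds :
    ∃ c C : ℝ, 0 < c ∧ 0 < C ∧
      ∀ (r : ℕ), 2 ≤ r → ∀ (lam : ℝ), 0 < lam → lam < 4 ^ r →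
        ∀ ρ ρt : ℂ,
          (1 - ρ) ^ (2 * r) - (-1) ^ r * (lam : ℂ) * ρ ^ r = 0 →
          (1 - ρt) ^ (2 * r) - (-1) ^ r * (lam : ℂ) * ρt ^ r = 0 →
          ρt ≠ ρ → ρt ≠ (starRingEnd ℂ) ρ → ρt ≠ ρ⁻¹ → ρt ≠ (starRingEnd ℂ) (ρ⁻¹) →
          c * ((r : ℝ) ^ 2)⁻¹ * lam ^ ((2 * (r : ℝ))⁻¹) ≤
              |‖ρt‖ - ‖ρ‖| ∧
            |‖ρt‖ - ‖ρ‖| ≤ C * lam ^ ((2 * (r : ℝ))⁻¹) := by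
  refine ⟨1 / 378, 6, by norm_num, by norm_num, ?_⟩
  intro r hr lam hlam hlam4 ρ ρt hρ hρt hne hne_conj hne_inv hne_conj_inv
  have hr0 : r ≠ 0 := by omega
  set m : ℝ := lam ^ (r : ℝ)⁻¹
  have hm : 0 < m := rpow_pos_of_pos hlam _
  have hm4 : m ≤ 4 := by
    have := rpow_le_rpow hlam.le hlam4.le (inv_nonneg.mpr (Nat.cast_nonneg r))
    rwa [pow_rpow_inv_natCast (by norm_num) hr0] at this
  have hsqrt : √m = lam ^ (2 * (r : ℝ))⁻¹ := by
    rw [sqrt_eq_rpow, ← rpow_mul hlam.le, mul_inv, mul_comm, one_div]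
  obtain ⟨hρ0, ω, hω, h⟩ := exists_add_inv_eq_of_root hr0 hlam hρ
  obtain ⟨hρt0, ω', hω', ht⟩ := exists_add_inv_eq_of_root hr0 hlam hρt
  have hω1 := Complex.norm_eq_one_of_pow_eq_one hω hr0
  have hω1' := Complex.norm_eq_one_of_pow_eq_one hω' hr0
  have hre := re_ne_re_of_add_inv_eq hρ0 hρt0 h ht (hω1'.trans hω1.symm) hne hne_conj hne_inv
    hne_conj_inv
  have hgap := Complex.eight_div_sq_le_abs_re_sub_re hr0 hω' hω hre
  have hlow := sqrt_mul_abs_re_sub_re_le_of_add_inv_eq hρ0 hρt0 hm hm4 hω1 hω1' h ht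
  rw [← hsqrt]
  constructor
  · calc 1 / 378 * ((r : ℝ) ^ 2)⁻¹ * √m = √m * (8 / r ^ 2) / 3024 := by ring
      _ ≤ √m * |ω'.re - ω.re| / 3024 := by gcongr
      _ ≤ |‖ρt‖ - ‖ρ‖| := by linarith
  · have hx := abs_norm_sub_one_le_of_add_inv_eq hρ0 hm.le hm4 hω1 h
    have hy := abs_norm_sub_one_le_of_add_inv_eq hρt0 hm.le hm4 hω1' ht
    calc |‖ρt‖ - ‖ρ‖| = |(‖ρt‖ - 1) - (‖ρ‖ - 1)| := by ring_nf
      _ ≤ |‖ρt‖ - 1| + |‖ρ‖ - 1| := abs_sub _ _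
      _ ≤ 6 * √m := by linarith
end

section
/- There exist absolute constants C, c, c₂ > 0 and c₁ > 1 (independent of N, r, λ) such that the following holds. Let r ≥ 2 be an integer, λ ∈ (0, 4^r), and let ρ, ρ' ∈ ℂ be two distinct roots of p(x) = (1−x)^{2r} − (−1)^r λ x^r with |ρ| ≠ 1. Then |ρ − ρ'| ≤ C λ^{1/(2r)}. Moreover, |ρ − ρ'| ≥ c₂ c₁^{−r} λ^{1/(2r)} if ρ' equals the complex conjugate of ρ or ρ' = ρ^{−1}, and |ρ − ρ'| ≥ c r^{−2} λ^{1/(2r)} otherwise. -/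
/-!
With `μ = 2 - ρ - ρ⁻¹ = -(1 - ρ)² / ρ` the equation reads `μ ^ r = λ = (t²) ^ r`, where
`t = λ^{1/(2r)} < 2`. Hence `|μ| = t²` and `|1 - ρ|² = t² |ρ|`, which keeps every root within `3t`
of `1` and gives the upper bound. Distinct `r`-th roots of unity are at least `4 / r` apart. If
`ρ ρ' ≠ 1` then `μ ≠ μ'`, and `(μ - μ') ρ ρ' = (ρ' - ρ) (ρ ρ' - 1)` turns the gap `|μ - μ'| ≥ 4t²/r`
into `|ρ - ρ'| ≳ t / r`. The pair `ρ, ρ⁻¹` shares its `μ`; there `(ρ - ρ⁻¹)² = μ (μ - 4)`, and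
`μ ≠ t²` because `ρ + ρ⁻¹ = 2 - t² ∈ (-2, 2)` forces `|ρ| = 1`. So every pair of distinct roots
off the unit circle is `t / (189 r)` apart, which dominates both lower bounds.
-/

open Real Complex

theorem Real.two_div_le_sin_pi_mul_div {j r : ℕ} (hj : 0 < j) (hjr : j < r) :
    2 / r ≤ Real.sin (π * j / r) := by
  have hr : (0 : ℝ) < r := Nat.cast_pos.mpr (by omega)
  have of_two_mul_le : ∀ k : ℕ, 0 < k → 2 * (k : ℝ) ≤ r → 2 / r ≤ Real.sin (π * k / r) := by
    intro k hk hkr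
    have hk1 : (1 : ℝ) ≤ k := by exact_mod_cast hk
    calc 2 / r ≤ 2 / π * (π * k / r) := by
          rw [show 2 / π * (π * k / r) = 2 * k / r by field_simp]
          gcongr
          linarith
      _ ≤ Real.sin (π * k / r) := by
          refine mul_le_sin (by positivity) ?_
          rw [div_le_iff₀ hr]
          nlinarith [pi_pos]
  rcases le_total (2 * (j : ℝ)) r with h | h
  · exact of_two_mul_le j hj h
  · have := of_two_mul_le (r - j) (by omega) (by rw [Nat.cast_sub hjr.le]; linarith)
    rwa [Nat.cast_sub hjr.le, show π * (r - j) / r = π - π * j / r by field_simp, sin_pi_sub]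
      at this

theorem Complex.four_div_le_norm_sub_one {r : ℕ} {ω : ℂ} (hω : ω ^ r = 1) (h1 : ω ≠ 1) :
    4 / r ≤ ‖ω - 1‖ := by
  rcases eq_or_ne r 0 with rfl | hr
  · simp
  have : NeZero r := ⟨hr⟩
  obtain ⟨j, hjr, rfl⟩ := (isPrimitiveRoot_exp r hr).eq_pow_of_pow_eq_one hω
  have hj : 0 < j := Nat.pos_of_ne_zero (by rintro rfl; exact h1 (pow_zero _))
  have hexp : exp (2 * π * I / r) ^ j = exp (I * ↑(2 * π * j / r)) := by
    rw [← Complex.exp_nat_mul]; congr 1; push_cast; ring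
  rw [hexp, norm_exp_I_mul_ofReal_sub_one, norm_mul, Real.norm_ofNat,
    show 2 * π * j / r / 2 = π * j / r by ring]
  have hsin := Real.two_div_le_sin_pi_mul_div hj hjr
  calc (4 : ℝ) / r = 2 * (2 / r) := by ring
    _ ≤ 2 * ‖Real.sin (π * j / r)‖ := by
        gcongr; exact hsin.trans (le_abs_self _)

theorem Complex.four_mul_norm_div_le_norm_sub_of_pow_eq_pow {r : ℕ} {μ ν : ℂ}
    (h : μ ^ r = ν ^ r) (hne : μ ≠ ν) : 4 * ‖ν‖ / r ≤ ‖μ - ν‖ := by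
  rcases eq_or_ne ν 0 with rfl | hν
  · simp
  have hω : (μ / ν) ^ r = 1 := by rw [div_pow, h, div_self (pow_ne_zero r hν)]
  have hω1 : μ / ν ≠ 1 := fun h1 => hne ((div_eq_one_iff_eq hν).mp h1)
  calc 4 * ‖ν‖ / r = ‖ν‖ * (4 / r) := by ring
    _ ≤ ‖ν‖ * ‖μ / ν - 1‖ := by gcongr; exact four_div_le_norm_sub_one hω hω1
    _ = ‖μ - ν‖ := by rw [← norm_mul, mul_sub, mul_div_cancel₀ _ hν, mul_one]

theorem Complex.two_mul_norm_sub_le_mul_norm_sub_four {μ : ℂ} {s : ℝ} (hμ : ‖μ‖ = s)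
    (hs : s ≤ 4) :
    2 * ‖μ - s‖ ≤ s * ‖μ - 4‖ := by
  have hs0 : 0 ≤ s := hμ ▸ norm_nonneg μ
  have h4 : 4 - s ≤ ‖μ - 4‖ := by
    simpa [hμ, norm_sub_rev μ] using norm_sub_norm_le (4 : ℂ) μ
  have hsplit : 4 * (μ - s) = s * (μ - 4) + ((4 - s : ℝ) : ℂ) * μ := by push_cast; ring
  have htri := norm_add_le ((s : ℂ) * (μ - 4)) (((4 - s : ℝ) : ℂ) * μ)
  rw [← hsplit, norm_mul, norm_mul, norm_mul, Complex.norm_real, Complex.norm_real,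
    Real.norm_of_nonneg hs0, Real.norm_of_nonneg (sub_nonneg.mpr hs), hμ, Complex.norm_ofNat]
    at htri
  nlinarith

theorem Complex.norm_eq_one_of_add_inv_eq_ofReal {ρ : ℂ} {x : ℝ} (hρ : ρ ≠ 0)
    (h : ρ + ρ⁻¹ = x) (hx : |x| < 2) : ‖ρ‖ = 1 := by
  have hq : ρ * ρ - x * ρ + 1 = 0 := by
    rw [← h]; field_simp; ring
  have hre := congrArg re hq
  have him := congrArg im hq
  simp only [mul_re, mul_im, sub_re, sub_im, add_re, add_im, ofReal_re, ofReal_im, one_re,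
    one_im, zero_re, zero_im] at hre him
  have hx2 : x ^ 2 < 4 := by nlinarith [abs_lt.mp hx]
  have hre' : 2 * ρ.re = x := by
    by_contra hne
    have him0 : ρ.im = 0 := by
      have : ρ.im * (2 * ρ.re - x) = 0 := by linarith
      exact (mul_eq_zero.mp this).resolve_right (sub_ne_zero.mpr hne)
    rw [him0] at hre
    nlinarith [sq_nonneg (2 * ρ.re - x)]
  rw [← hre'] at hre
  rw [← pow_left_inj₀ (norm_nonneg ρ) zero_le_one two_ne_zero, Complex.sq_norm, normSq_apply]
  linarith

theorem Complex.norm_eq_of_pow_eq_ofReal_pow {r : ℕ} {μ : ℂ} {s : ℝ} (hr : r ≠ 0) (hs : 0 ≤ s)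
    (h : μ ^ r = (s : ℂ) ^ r) : ‖μ‖ = s := by
  rw [← pow_left_inj₀ (norm_nonneg μ) hs hr, ← norm_pow, h, norm_pow, norm_real,
    Real.norm_of_nonneg hs]

theorem sub_sub_inv_mul_self {ρ : ℂ} (hρ : ρ ≠ 0) : (2 - ρ - ρ⁻¹) * ρ = -(1 - ρ) ^ 2 := by
  field_simp
  ring

theorem norm_one_sub_sq {ρ : ℂ} (hρ : ρ ≠ 0) : ‖1 - ρ‖ ^ 2 = ‖2 - ρ - ρ⁻¹‖ * ‖ρ‖ := by
  rw [← norm_pow, ← norm_mul, sub_sub_inv_mul_self hρ, norm_neg]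

theorem norm_mem_Icc_of_norm_one_sub_sq {ρ : ℂ} {s : ℝ} (hs : s ≤ 4)
    (h : ‖1 - ρ‖ ^ 2 = s * ‖ρ‖) : 1 / 6 ≤ ‖ρ‖ ∧ ‖ρ‖ ≤ 6 := by
  have hdist := abs_le.mp (abs_norm_sub_norm_le (1 : ℂ) ρ)
  rw [norm_one] at hdist
  have hsq : (1 - ‖ρ‖) ^ 2 ≤ ‖1 - ρ‖ ^ 2 := sq_le_sq' hdist.1 hdist.2
  constructor <;> nlinarith [norm_nonneg ρ]

theorem norm_one_sub_le_three_mul {ρ : ℂ} {t : ℝ} (ht : 0 ≤ t) (ht2 : t ≤ 2)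
    (h : ‖1 - ρ‖ ^ 2 = t ^ 2 * ‖ρ‖) : ‖1 - ρ‖ ≤ 3 * t := by
  have hρ6 := (norm_mem_Icc_of_norm_one_sub_sq (by nlinarith) h).2
  rw [← pow_le_pow_iff_left₀ (norm_nonneg _) (by positivity) two_ne_zero]
  nlinarith

theorem norm_sub_le_six_mul {t : ℝ} {ρ ρ' : ℂ} (ht : 0 ≤ t) (ht2 : t ≤ 2) (hρ : ρ ≠ 0)
    (hρ' : ρ' ≠ 0) (hμ : ‖2 - ρ - ρ⁻¹‖ = t ^ 2) (hμ' : ‖2 - ρ' - ρ'⁻¹‖ = t ^ 2) :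
    ‖ρ - ρ'‖ ≤ 6 * t := by
  have h1 := norm_one_sub_le_three_mul ht ht2 (hμ ▸ norm_one_sub_sq hρ)
  have h2 := norm_one_sub_le_three_mul ht ht2 (hμ' ▸ norm_one_sub_sq hρ')
  calc ‖ρ - ρ'‖ = ‖(1 - ρ') - (1 - ρ)‖ := by ring_nf
    _ ≤ ‖1 - ρ'‖ + ‖1 - ρ‖ := norm_sub_le _ _
    _ ≤ 6 * t := by linarith

theorem norm_mul_sub_one_le {ρ ρ' : ℂ} {t : ℝ} (ht : 0 ≤ t) (ht2 : t ≤ 2)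
    (hsq : ‖1 - ρ‖ ^ 2 = t ^ 2 * ‖ρ‖) (hsq' : ‖1 - ρ'‖ ^ 2 = t ^ 2 * ‖ρ'‖) :
    ‖ρ * ρ' - 1‖ ≤ 21 * t :=
  calc ‖ρ * ρ' - 1‖ = ‖ρ * (ρ' - 1) + (ρ - 1)‖ := by ring_nf
    _ ≤ ‖ρ * (ρ' - 1)‖ + ‖ρ - 1‖ := norm_add_le _ _
    _ = ‖ρ‖ * ‖1 - ρ'‖ + ‖1 - ρ‖ := by rw [norm_mul, norm_sub_rev ρ', norm_sub_rev ρ]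
    _ ≤ 6 * (3 * t) + 3 * t := by
        gcongr
        · exact (norm_mem_Icc_of_norm_one_sub_sq (by nlinarith) hsq).2
        · exact norm_one_sub_le_three_mul ht ht2 hsq'
        · exact norm_one_sub_le_three_mul ht ht2 hsq
    _ = 21 * t := by ring

theorem ne_zero_and_sub_sub_inv_pow_eq {r : ℕ} {lam : ℝ} {ρ : ℂ} (hr : r ≠ 0)
    (h : (1 - ρ) ^ (2 * r) - (-1) ^ r * (lam : ℂ) * ρ ^ r = 0) :
    ρ ≠ 0 ∧ (2 - ρ - ρ⁻¹) ^ r = lam := by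
  have hρ : ρ ≠ 0 := by
    rintro rfl
    simp [zero_pow hr] at h
  refine ⟨hρ, mul_right_cancel₀ (pow_ne_zero r hρ) ?_⟩
  have hsign : ((-1 : ℂ) ^ r) ^ 2 = 1 := by rw [← pow_mul, mul_comm, pow_mul]; simp
  rw [← mul_pow, sub_sub_inv_mul_self hρ, neg_pow, ← pow_mul]
  linear_combination (-1 : ℂ) ^ r * h + (lam : ℂ) * ρ ^ r * hsign

theorem sq_rpow_inv_two_mul_pow {r : ℕ} {lam : ℝ} (hlam : 0 ≤ lam) (hr : r ≠ 0) :
    ((lam ^ ((2 * (r : ℝ))⁻¹)) ^ 2) ^ r = lam := by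
  rw [← pow_mul, show 2 * (r : ℝ) = ((2 * r : ℕ) : ℝ) by push_cast; ring,
    Real.rpow_inv_natCast_pow hlam (by omega)]

theorem rpow_inv_two_mul_lt_two {r : ℕ} {lam : ℝ} (hlam0 : 0 ≤ lam) (hlam : lam < 4 ^ r)
    (hr : r ≠ 0) : lam ^ ((2 * (r : ℝ))⁻¹) < 2 := by
  have ht := Real.rpow_nonneg hlam0 (2 * (r : ℝ))⁻¹
  have hpow : ((lam ^ ((2 * (r : ℝ))⁻¹)) ^ 2) ^ r < ((2 : ℝ) ^ 2) ^ r := by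
    rw [sq_rpow_inv_two_mul_pow hlam0 hr]; norm_num [hlam]
  rw [pow_lt_pow_iff_left₀ (by positivity) (by positivity) hr,
    pow_lt_pow_iff_left₀ ht zero_le_two two_ne_zero] at hpow
  exact hpow

theorem div_le_norm_sub_of_mul_ne_one {r : ℕ} {t : ℝ} {ρ ρ' : ℂ} (ht : 0 < t) (ht2 : t ≤ 2)
    (hρ : ρ ≠ 0) (hρ' : ρ' ≠ 0) (hμ : ‖2 - ρ - ρ⁻¹‖ = t ^ 2) (hμ' : ‖2 - ρ' - ρ'⁻¹‖ = t ^ 2)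
    (hpow : (2 - ρ - ρ⁻¹) ^ r = (2 - ρ' - ρ'⁻¹) ^ r) (hne : ρ ≠ ρ') (hinv : ρ * ρ' ≠ 1) :
    t / (189 * r) ≤ ‖ρ - ρ'‖ := by
  have hid : ((2 - ρ - ρ⁻¹) - (2 - ρ' - ρ'⁻¹)) * (ρ * ρ') = (ρ' - ρ) * (ρ * ρ' - 1) := by
    field_simp
    ring
  have hμne : 2 - ρ - ρ⁻¹ ≠ 2 - ρ' - ρ'⁻¹ := by
    intro heq
    rw [heq, sub_self, zero_mul, eq_comm, mul_eq_zero, sub_eq_zero, sub_eq_zero] at hid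
    exact hid.elim (fun h => hne h.symm) hinv
  have hsep := four_mul_norm_div_le_norm_sub_of_pow_eq_pow hpow hμne
  rw [hμ'] at hsep
  have hsq := hμ ▸ norm_one_sub_sq hρ
  have hsq' := hμ' ▸ norm_one_sub_sq hρ'
  have hρ6 := norm_mem_Icc_of_norm_one_sub_sq (by nlinarith) hsq
  have hρ6' := norm_mem_Icc_of_norm_one_sub_sq (by nlinarith) hsq'
  have hprod := norm_mul_sub_one_le ht.le ht2 hsq hsq'
  -- `189 = 6 * 6 * 21 / 4`
  have hgap : 4 * t ^ 2 / r * (1 / 6) * (1 / 6) ≤ ‖ρ - ρ'‖ * (21 * t) :=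
    calc 4 * t ^ 2 / r * (1 / 6) * (1 / 6)
        ≤ ‖(2 - ρ - ρ⁻¹) - (2 - ρ' - ρ'⁻¹)‖ * ‖ρ‖ * ‖ρ'‖ := by
          gcongr
          · exact hρ6.1
          · exact hρ6'.1
      _ = ‖ρ - ρ'‖ * ‖ρ * ρ' - 1‖ := by
          rw [mul_assoc, ← norm_mul, ← norm_mul, hid, norm_mul, norm_sub_rev]
      _ ≤ ‖ρ - ρ'‖ * (21 * t) := by gcongr
  rcases eq_or_ne r 0 with rfl | hr
  · simp
  have hr' : (0 : ℝ) < r := Nat.cast_pos.mpr (Nat.pos_of_ne_zero hr)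
  rw [div_le_iff₀ (by positivity)]
  field_simp at hgap
  linarith

theorem div_le_norm_sub_inv_self {r : ℕ} {t : ℝ} {ρ : ℂ} (ht : 0 < t) (ht2 : t < 2)
    (hρ : ρ ≠ 0) (hμ : ‖2 - ρ - ρ⁻¹‖ = t ^ 2) (hpow : (2 - ρ - ρ⁻¹) ^ r = ((t ^ 2 : ℝ) : ℂ) ^ r)
    (hρ1 : ‖ρ‖ ≠ 1) : t / (189 * r) ≤ ‖ρ - ρ⁻¹‖ := by
  have hμne : 2 - ρ - ρ⁻¹ ≠ ((t ^ 2 : ℝ) : ℂ) := by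
    intro heq
    refine hρ1 (norm_eq_one_of_add_inv_eq_ofReal hρ (x := 2 - t ^ 2) ?_ ?_)
    · push_cast at heq ⊢
      linear_combination -heq
    · rw [abs_lt]
      constructor <;> nlinarith
  have hsep := four_mul_norm_div_le_norm_sub_of_pow_eq_pow hpow hμne
  rw [norm_real, Real.norm_of_nonneg (by positivity)] at hsep
  have hfour := two_mul_norm_sub_le_mul_norm_sub_four hμ (by nlinarith)
  have hsq : (ρ - ρ⁻¹) ^ 2 = (2 - ρ - ρ⁻¹) * ((2 - ρ - ρ⁻¹) - 4) := by
    field_simp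
    ring
  have hlow : 8 * t ^ 2 / r ≤ ‖ρ - ρ⁻¹‖ ^ 2 := by
    rw [← norm_pow, hsq, norm_mul, hμ, show 8 * t ^ 2 / r = 2 * (4 * t ^ 2 / r) by ring]
    linarith
  rcases eq_or_ne r 0 with rfl | hr
  · simp
  have hr' : (1 : ℝ) ≤ r := by exact_mod_cast Nat.one_le_iff_ne_zero.mpr hr
  refine le_of_pow_le_pow_left₀ two_ne_zero (norm_nonneg _) (le_trans ?_ hlow)
  rw [div_pow, div_le_div_iff₀ (by positivity) (by positivity)]
  have hr2 : (r : ℝ) ≤ 8 * (189 * r) ^ 2 := by nlinarith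
  nlinarith [mul_le_mul_of_nonneg_left hr2 (sq_nonneg t)]

theorem div_le_norm_sub_of_norm_ne_one {r : ℕ} {t : ℝ} {ρ ρ' : ℂ} (ht : 0 < t) (ht2 : t < 2)
    (hρ : ρ ≠ 0) (hρ' : ρ' ≠ 0) (hμ : ‖2 - ρ - ρ⁻¹‖ = t ^ 2) (hμ' : ‖2 - ρ' - ρ'⁻¹‖ = t ^ 2)
    (hpow : (2 - ρ - ρ⁻¹) ^ r = ((t ^ 2 : ℝ) : ℂ) ^ r)
    (hpow' : (2 - ρ' - ρ'⁻¹) ^ r = ((t ^ 2 : ℝ) : ℂ) ^ r) (hne : ρ ≠ ρ') (hρ1 : ‖ρ‖ ≠ 1) :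
    t / (189 * r) ≤ ‖ρ - ρ'‖ := by
  by_cases hinv : ρ * ρ' = 1
  · rw [eq_inv_of_mul_eq_one_right hinv]
    exact div_le_norm_sub_inv_self ht ht2 hρ hμ hpow hρ1
  · exact div_le_norm_sub_of_mul_ne_one ht ht2.le hρ hρ' hμ hμ' (hpow.trans hpow'.symm) hne hinv

/-- There exist absolute constants `C, c, c₂ > 0` and `c₁ > 1` such that for any `r ≥ 2`,
`λ ∈ (0, 4^r)`, and any two distinct roots `ρ, ρ'` of `p(x) = (1-x)^{2r} - (-1)^r λ x^r`
with `|ρ| ≠ 1`, one has `|ρ - ρ'| ≤ C λ^{1/(2r)}`; moreover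
`|ρ - ρ'| ≥ c₂ c₁^{-r} λ^{1/(2r)}` when `ρ' = conj ρ` or `ρ' = ρ⁻¹`, and
`|ρ - ρ'| ≥ c r⁻² λ^{1/(2r)}` otherwise. -/
theorem root_distance_bounds :
    ∃ C c c₁ c₂ : ℝ, 0 < C ∧ 0 < c ∧ 1 < c₁ ∧ 0 < c₂ ∧
      ∀ (r : ℕ), 2 ≤ r → ∀ (lam : ℝ), 0 < lam → lam < 4 ^ r →
        ∀ ρ ρ' : ℂ,
          (1 - ρ) ^ (2 * r) - (-1) ^ r * (lam : ℂ) * ρ ^ r = 0 →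
          (1 - ρ') ^ (2 * r) - (-1) ^ r * (lam : ℂ) * ρ' ^ r = 0 →
          ρ ≠ ρ' → ‖ρ‖ ≠ 1 →
          ‖ρ - ρ'‖ ≤ C * lam ^ ((2 * (r : ℝ))⁻¹) ∧
          ((ρ' = (starRingEnd ℂ) ρ ∨ ρ' = ρ⁻¹) →
            c₂ * (c₁ ^ r)⁻¹ * lam ^ ((2 * (r : ℝ))⁻¹) ≤ ‖ρ - ρ'‖) ∧
          (¬(ρ' = (starRingEnd ℂ) ρ ∨ ρ' = ρ⁻¹) →
            c * ((r : ℝ) ^ 2)⁻¹ * lam ^ ((2 * (r : ℝ))⁻¹) ≤ ‖ρ - ρ'‖) := by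
  refine ⟨6, 1 / 189, 2, 1 / 189, by norm_num, by norm_num, by norm_num, by norm_num, ?_⟩
  intro r hr lam hlam0 hlam4 ρ ρ' h h' hne hρ1
  have hr0 : r ≠ 0 := by omega
  set t := lam ^ ((2 * (r : ℝ))⁻¹)
  have ht0 : 0 < t := by positivity
  have ht2 : t < 2 := rpow_inv_two_mul_lt_two hlam0.le hlam4 hr0
  have hscale : (lam : ℂ) = ((t ^ 2 : ℝ) : ℂ) ^ r := by
    rw [← ofReal_pow, sq_rpow_inv_two_mul_pow hlam0.le hr0]
  obtain ⟨hρ, hpow⟩ := ne_zero_and_sub_sub_inv_pow_eq hr0 h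
  obtain ⟨hρ', hpow'⟩ := ne_zero_and_sub_sub_inv_pow_eq hr0 h'
  rw [hscale] at hpow hpow'
  have hμ := norm_eq_of_pow_eq_ofReal_pow hr0 (by positivity) hpow
  have hμ' := norm_eq_of_pow_eq_ofReal_pow hr0 (by positivity) hpow'
  have hlow := div_le_norm_sub_of_norm_ne_one ht0 ht2 hρ hρ' hμ hμ' hpow hpow' hne hρ1
  have hr1 : (1 : ℝ) ≤ r := by exact_mod_cast hr0.bot_lt
  refine ⟨norm_sub_le_six_mul ht0.le ht2.le hρ hρ' hμ hμ', fun _ => hlow.trans' ?_,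
    fun _ => hlow.trans' ?_⟩
  · calc 1 / 189 * ((2 : ℝ) ^ r)⁻¹ * t ≤ 1 / 189 * (r : ℝ)⁻¹ * t := by
          gcongr; exact_mod_cast Nat.lt_two_pow_self.le
      _ = t / (189 * r) := by ring
  · calc 1 / 189 * ((r : ℝ) ^ 2)⁻¹ * t ≤ 1 / 189 * (r : ℝ)⁻¹ * t := by
          gcongr; nlinarith
      _ = t / (189 * r) := by ring
end

section
/- Let r ≥ 2 be an integer, λ ∈ (0, 4^r) a real number, and k ∈ {0,1,…,r−1}. The roots of the quadratic q_k(x) = −(1−x)² − λ^{1/r} e^{2kπi/r} x are real if and only if r is even and k = r/2. -/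
/-- For `r ≥ 2`, `λ ∈ (0, 4^r)` and `k ∈ {0,…,r-1}`, the roots of `q_k` are real
if and only if `r` is even and `k = r/2`. -/
theorem qfac_roots_real_iff
    (r : ℕ) (hr : 2 ≤ r) (lam : ℝ) (hlam0 : 0 < lam) (hlam4 : lam < 4 ^ r)
    (k : ℕ) (hk : k < r) :
    ∀ ρ : ℂ, qfac r lam k ρ = 0 → (ρ.im = 0 ↔ (Even r ∧ 2 * k = r)) := by
  intro ρ hρ
  have hrR : (0:ℝ) < r := by exact_mod_cast Nat.lt_of_lt_of_le Nat.zero_lt_two hr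
  set c : ℝ := lam ^ ((r:ℝ)⁻¹) with hc
  have hc0 : 0 < c := Real.rpow_pos_of_pos hlam0 _
  have hc4 : c < 4 := by
    have h1 : c < ((4:ℝ)^r) ^ ((r:ℝ)⁻¹) :=
      Real.rpow_lt_rpow hlam0.le hlam4 (by positivity)
    have h2 : ((4:ℝ)^r) ^ ((r:ℝ)⁻¹) = 4 := by
      rw [← Real.rpow_natCast 4 r, ← Real.rpow_mul (by norm_num),
        mul_inv_cancel₀ (ne_of_gt hrR), Real.rpow_one]
    rwa [h2] at h1
  set θ : ℝ := 2 * Real.pi * k / r with hθ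
  have hexp : Complex.exp (2 * (k : ℂ) * (Real.pi : ℂ) * Complex.I / (r : ℂ))
      = (Real.cos θ : ℂ) + (Real.sin θ : ℂ) * Complex.I := by
    rw [show (2 * (k:ℂ) * (Real.pi:ℂ) * Complex.I / (r:ℂ)) = ((θ:ℝ):ℂ) * Complex.I by
      push_cast [hθ]; ring]
    simp [Complex.exp_mul_I, ← Complex.ofReal_cos, ← Complex.ofReal_sin]
  set a := ρ.re with ha
  set b := ρ.im with hb
  set C := Real.cos θ with hCdef
  set S := Real.sin θ with hSdef
  have hCS : C^2 + S^2 = 1 := Real.cos_sq_add_sin_sq θ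
  unfold qfac at hρ
  rw [hexp, show ρ = (a:ℂ) + (b:ℂ)*Complex.I from (Complex.re_add_im ρ).symm] at hρ
  have hre := congrArg Complex.re hρ
  have him := congrArg Complex.im hρ
  simp only [Complex.add_re, Complex.add_im, Complex.sub_re, Complex.sub_im, Complex.neg_re,
    Complex.neg_im, Complex.mul_re, Complex.mul_im, Complex.one_re, Complex.one_im,
    Complex.ofReal_re, Complex.ofReal_im, Complex.I_re, Complex.I_im, Complex.zero_re,
    Complex.zero_im, pow_two] at hre him
  ring_nf at hre him
  rw [← hc] at hre him
  constructor
  · intro hb0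
    rw [hb0] at hre him
    ring_nf at hre him
    -- hre : -1 + a * 2 + (-(a * c * C) - a ^ 2) = 0
    -- him : -(a * c * S) = 0
    have haz : a ≠ 0 := by
      intro h; rw [h] at hre; norm_num at hre
    have hS0 : S = 0 := by
      have h' : a * c * S = 0 := by linarith
      simpa [mul_eq_zero, haz, hc0.ne'] using h'
    rw [hSdef] at hS0
    obtain ⟨n, hn⟩ := Real.sin_eq_zero_iff.mp hS0
    rw [hθ, eq_div_iff (ne_of_gt hrR)] at hn
    have hnr : (n:ℝ) * r = 2 * k := by
      apply mul_left_cancel₀ Real.pi_ne_zero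
      linear_combination hn
    have hz : n * r = 2 * k := by exact_mod_cast hnr
    have hrz : (2:ℤ) ≤ (r:ℤ) := by exact_mod_cast hr
    have hkz : (k:ℤ) < (r:ℤ) := by exact_mod_cast hk
    have hn0 : 0 ≤ n := by nlinarith [hz]
    have hn2 : n < 2 := by nlinarith [hz]
    interval_cases n
    · exfalso
      have hk0 : k = 0 := by omega
      have hC1 : C = 1 := by
        rw [hCdef, hθ, hk0]; simp
      rw [hC1] at hre
      nlinarith [sq_nonneg (2*a + c - 2), mul_pos hc0 (show (0:ℝ) < 4 - c by linarith)]
    · have h2k : 2 * k = r := by omega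
      exact ⟨⟨k, by omega⟩, h2k⟩
  · rintro ⟨hev, hkr⟩
    have h2k : ((2*k:ℕ):ℝ) = (r:ℝ) := by exact_mod_cast congrArg Nat.cast hkr
    push_cast at h2k
    have hθπ : θ = Real.pi := by
      rw [hθ]; rw [div_eq_iff (ne_of_gt hrR)]; linear_combination Real.pi * h2k
    have hCv : C = -1 := by rw [hCdef, hθπ, Real.cos_pi]
    have hSv : S = 0 := by rw [hSdef, hθπ, Real.sin_pi]
    rw [hCv, hSv] at hre him
    by_contra hbne
    have hb2 : 0 < b^2 := by
      have := sq_abs b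
      nlinarith [abs_pos.mpr hbne, abs_nonneg b]
    have h' : b * (2 - 2*a + c) = 0 := by linear_combination him
    have hfac : 2 - 2*a + c = 0 := (mul_eq_zero.mp h').resolve_left hbne
    have h1 : a * (2 - 2*a + c) = 0 := by rw [hfac]; ring
    linarith [hre, h1, hfac, sq_nonneg (a-1), hc0, hb2]
end

section
/- Let n be a positive integer and x₁, …, x_n distinct complex numbers, and let A ∈ ℂ^{n×n} be the Vandermonde matrix with A_{i,j} = x_i^{j−1}. Define L⁻ ∈ ℂ^{n×n} by (L⁻)_{i,j} = 0 for i < j, (L⁻)_{1,1} = 1, and (L⁻)_{i,j} = ∏_{k=1, k≠j}^{i} 1/(x_j − x_k) for i ≥ j with i ≥ 2; define U⁻ ∈ ℂ^{n×n} by (U⁻)_{i,j} = (−1)^{i+j} Σ_{1 ≤ a₁ < ⋯ < a_{j−i} ≤ j−1} x_{a₁}⋯x_{a_{j−i}} for i ≤ j (the empty sum for i = j being defined as 1) and (U⁻)_{i,j} = 0 for i > j. Then A is invertible and A^{−1} = U⁻ L⁻. -/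
/-!
Column `j` of `U⁻` lists the coefficients of the Newton polynomial `∏_{l < j} (X - x_l)`
(Vieta), so `A U⁻` is the matrix `N` of the Newton polynomials evaluated at the nodes. Row `i`
of `L⁻` holds the weights of the divided difference on the nodes `x_0, …, x_i`. On `i + 1`
nodes the divided difference of a polynomial of degree at most `i` is its coefficient of `X^i`,
which for the Newton polynomial of degree `j ≤ i` is `δ_ij`; for `j > i` all these nodes are
roots. Hence `L⁻ N = 1`, so `N L⁻ = 1` and `A (U⁻ L⁻) = 1`.
-/

open Finset Polynomial Lagrange Matrix

theorem Lagrange.coeff_nodal {R ι : Type*} [CommRing R] (s : Finset ι) (v : ι → R) {k : ℕ}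
    (hk : k ≤ #s) :
    (nodal s v).coeff k = (-1) ^ (#s - k) * ∑ t ∈ s.powersetCard (#s - k), ∏ i ∈ t, v i := by
  have h := Multiset.prod_X_sub_C_coeff (s.val.map v) (k := k) (by simpa using hk)
  rw [Multiset.map_map, Multiset.card_map, Finset.esymm_map_val] at h
  rwa [nodal_eq, prod_eq_multiset_prod]

section

variable {n : ℕ}

theorem Lagrange.coeff_nodal_Iio {R : Type*} [CommRing R] [Nontrivial R] (x : Fin n → R)
    (i j : Fin n) :
    (nodal (Iio j) x).coeff i =
      if i ≤ j then (-1) ^ ((i : ℕ) + j) * ∑ t ∈ (Iio j).powersetCard (j - i), ∏ k ∈ t, x k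
      else 0 := by
  split_ifs with hij
  · rw [coeff_nodal _ _ (by simpa using hij), Fin.card_Iio,
      show (i : ℕ) + j = (j - i) + 2 * i by omega, pow_add, pow_mul, neg_one_sq, one_pow, mul_one]
  · exact coeff_eq_zero_of_natDegree_lt (by simpa [natDegree_nodal] using hij)

theorem Matrix.vandermonde_mul_coeff_nodal_Iio {R : Type*} [CommRing R] [Nontrivial R]
    (x : Fin n → R) :
    vandermonde x * of (fun i j : Fin n => (nodal (Iio j) x).coeff i) =
      of fun i j => (nodal (Iio j) x).eval (x i) :=
  (eval_matrixOfPolynomials_eq_vandermonde_mul_matrixOfPolynomials x _ fun j => by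
    simp [natDegree_nodal]).symm

theorem Matrix.nodalWeight_Iic_mul_eval_nodal_Iio {K : Type*} [Field K] {x : Fin n → K}
    (hx : Function.Injective x) :
    of (fun i k => if k ≤ i then nodalWeight (Iic i) x k else 0) *
      of (fun k j => (nodal (Iio j) x).eval (x k)) = 1 := by
  ext i j
  rw [mul_apply, one_apply]
  simp only [of_apply, ite_mul, zero_mul]
  rw [← sum_filter, filter_ge_eq_Iic]
  rcases le_or_gt j i with hji | hij
  · have hdeg : (nodal (Iio j) x).degree < #(Iic i) := by
      rw [degree_nodal, Fin.card_Iio, Fin.card_Iic]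
      exact_mod_cast Nat.lt_succ_of_le hji
    have hcoeff := coeff_eq_sum hx.injOn hdeg
    rw [Fin.card_Iic, add_tsub_cancel_right] at hcoeff
    have hsum : ∑ k ∈ Iic i, nodalWeight (Iic i) x k * (nodal (Iio j) x).eval (x k) =
        (nodal (Iio j) x).coeff i := by
      rw [hcoeff]
      refine sum_congr rfl fun k _ => ?_
      rw [nodalWeight, prod_inv_distrib, div_eq_inv_mul]
    rw [hsum]
    rcases eq_or_ne i j with rfl | hne
    · simpa [natDegree_nodal] using (nodal_monic (s := Iio i) (v := x)).coeff_natDegree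
    · rw [if_neg hne]
      refine coeff_eq_zero_of_natDegree_lt ?_
      rw [natDegree_nodal, Fin.card_Iio]
      exact Fin.val_fin_lt.2 (lt_of_le_of_ne hji hne.symm)
  · rw [if_neg hij.ne]
    refine sum_eq_zero fun k hk => ?_
    rw [eval_nodal_at_node (mem_Iio.2 ((mem_Iic.1 hk).trans_lt hij)), mul_zero]

end

theorem vandermonde_inverse_general (n : ℕ) (x : Fin n → ℂ)
    (hx : Function.Injective x) :
    IsUnit (Matrix.of fun i j : Fin n => x i ^ (j : ℕ)).det ∧
    (Matrix.of fun i j : Fin n => x i ^ (j : ℕ))⁻¹ =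
      (Matrix.of fun i j : Fin n =>
        if (i : ℕ) ≤ (j : ℕ) then
          (-1 : ℂ) ^ ((i : ℕ) + (j : ℕ)) *
            ∑ s ∈ Finset.powersetCard ((j : ℕ) - (i : ℕ))
                (Finset.univ.filter fun k : Fin n => (k : ℕ) < (j : ℕ)),
              ∏ k ∈ s, x k
        else 0) *
      (Matrix.of fun i j : Fin n =>
        if (j : ℕ) ≤ (i : ℕ) then
          ∏ k ∈ Finset.univ.filter fun k : Fin n => (k : ℕ) ≤ (i : ℕ) ∧ k ≠ j,
            (x j - x k)⁻¹
        else 0) := by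
  have key : vandermonde x * (of (fun i j : Fin n => (nodal (Iio j) x).coeff i) *
      of fun i k => if k ≤ i then nodalWeight (Iic i) x k else 0) = 1 := by
    rw [← Matrix.mul_assoc, vandermonde_mul_coeff_nodal_Iio, mul_eq_one_comm,
      nodalWeight_Iic_mul_eval_nodal_Iio hx]
  show IsUnit (vandermonde x).det ∧ (vandermonde x)⁻¹ = _
  convert And.intro (isUnit_det_of_right_inverse key) (inv_eq_right_inv key) using 3
  · ext i j
    simp only [of_apply, coeff_nodal_Iio, Fin.val_fin_le, Fin.val_fin_lt, filter_gt_eq_Iio]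
  · ext i j
    simp only [of_apply, nodalWeight, Fin.val_fin_le, filter_and, filter_ge_eq_Iic, filter_ne',
      inter_erase, inter_univ]

/-- For distinct nodes `x₁,…,x_n`, the Vandermonde matrix `A` with `A_{i,j} = x_i^{j-1}`
is invertible, and `A⁻¹ = U⁻ L⁻` where `(L⁻)_{i,j} = ∏_{k ≤ i, k ≠ j} (x_j - x_k)⁻¹` for
`i ≥ j` and `0` otherwise, and `(U⁻)_{i,j} = (-1)^{i+j} e_{j-i}(x₁,…,x_{j-1})` for `i ≤ j`
(elementary symmetric polynomial, with the empty sum equal to `1`) and `0` otherwise. -/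
theorem vandermonde_inverse (n : ℕ) (hn : 0 < n) (x : Fin n → ℂ)
    (hx : Function.Injective x) :
    IsUnit (Matrix.of fun i j : Fin n => x i ^ (j : ℕ)).det ∧
    (Matrix.of fun i j : Fin n => x i ^ (j : ℕ))⁻¹ =
      (Matrix.of fun i j : Fin n =>
        if (i : ℕ) ≤ (j : ℕ) then
          (-1 : ℂ) ^ ((i : ℕ) + (j : ℕ)) *
            ∑ s ∈ Finset.powersetCard ((j : ℕ) - (i : ℕ))
                (Finset.univ.filter fun k : Fin n => (k : ℕ) < (j : ℕ)),
              ∏ k ∈ s, x k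
        else 0) *
      (Matrix.of fun i j : Fin n =>
        if (j : ℕ) ≤ (i : ℕ) then
          ∏ k ∈ Finset.univ.filter fun k : Fin n => (k : ℕ) ≤ (i : ℕ) ∧ k ≠ j,
            (x j - x k)⁻¹
        else 0) :=
  vandermonde_inverse_general n x hx
end

section
/- Let ρ₁, ρ₂ > 0 with α := ρ₁/ρ₂ > 1, let N be a positive integer, and let {B_i}_{i=1}^{N} and {B'_i}_{i=1}^{N} be sequences of positive real numbers such that B_{i+1}/B_i ≥ ρ₁ and B'_{i+1}/B'_i ≤ ρ₂ for all 1 ≤ i ≤ N−1. Then for any natural number q, the set K = { i ∈ {1,…,N} : B_i/B'_i ≤ α^{−q/2} or B_i/B'_i ≥ α^{q/2} } has cardinality |K| ≥ N − q − 1. -/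
/-!
The ratio `r i = B i / B' i` grows at least geometrically with factor `α = ρ₁ / ρ₂`, so
`α ^ (j - i) * r i ≤ r j` for `i ≤ j`. Two indices `i ≤ j` whose ratios both lie in the window
`(α ^ (-q/2), α ^ (q/2))` therefore satisfy `α ^ (j - i) < α ^ q`, i.e. `j - i < q`: the indices
outside `K` lie in an interval of length `q`, so there are at most `q` of them.
-/

open Finset

theorem pow_sub_mul_le_of_mul_le_succ {N : ℕ} {c : ℝ} (hc : 0 ≤ c) {f : Fin N → ℝ}
    (hf : ∀ (i : Fin N) (h : (i : ℕ) + 1 < N), c * f i ≤ f ⟨i + 1, h⟩) {i j : Fin N}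
    (hij : i ≤ j) : c ^ ((j : ℕ) - i) * f i ≤ f j := by
  have hchain : ∀ (k : ℕ) (h : (i : ℕ) + k < N), c ^ k * f i ≤ f ⟨i + k, h⟩ := by
    intro k
    induction k with
    | zero => simp
    | succ k ih =>
      intro h
      calc c ^ (k + 1) * f i = c * (c ^ k * f i) := by ring
        _ ≤ c * f ⟨i + k, by omega⟩ := mul_le_mul_of_nonneg_left (ih (by omega)) hc
        _ ≤ f ⟨i + (k + 1), h⟩ := hf ⟨i + k, by omega⟩ h
  have hj : j = ⟨i + ((j : ℕ) - i), by omega⟩ := Fin.ext (by simp; omega)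
  conv_rhs => rw [hj]
  exact hchain _ _

theorem div_mul_div_le_div_of_le_div {ρ₁ ρ₂ a b c d : ℝ} (ha : 0 < a) (hb : 0 < b) (hc : 0 ≤ c)
    (hd : 0 < d)
    (hca : ρ₁ ≤ c / a) (hdb : d / b ≤ ρ₂) : ρ₁ / ρ₂ * (a / b) ≤ c / d := by
  rw [le_div_iff₀ ha] at hca
  rw [div_le_iff₀ hb] at hdb
  rw [← mul_div_mul_comm]
  exact div_le_div₀ hc hca hd hdb

theorem nat_lt_two_mul_of_pow_mul_le {α s x y : ℝ} (hα : 1 < α) {k : ℕ} (hx : α ^ (-s) < x)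
    (hy : y < α ^ s) (hxy : α ^ k * x ≤ y) : (k : ℝ) < 2 * s := by
  have hα₀ : 0 < α := by linarith
  have : α ^ ((k : ℝ) + -s) < α ^ s := by
    rw [Real.rpow_add hα₀, Real.rpow_natCast]
    calc α ^ k * α ^ (-s) < α ^ k * x := mul_lt_mul_of_pos_left hx (pow_pos hα₀ k)
      _ ≤ y := hxy
      _ < α ^ s := hy
  linarith [(Real.rpow_lt_rpow_left_iff hα).mp this]

theorem Finset.card_le_of_forall_lt_add {s : Finset ℕ} {q : ℕ}
    (h : ∀ i ∈ s, ∀ j ∈ s, i ≤ j → j < i + q) : #s ≤ q := by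
  rcases s.eq_empty_or_nonempty with rfl | hs
  · simp
  have hsub : s ⊆ Ico (s.min' hs) (s.min' hs + q) := fun j hj =>
    mem_Ico.mpr ⟨s.min'_le j hj, h _ (s.min'_mem hs) j hj (s.min'_le j hj)⟩
  simpa using card_le_card hsub

theorem card_filter_mem_Ioo_rpow_le {N : ℕ} {α : ℝ} (hα : 1 < α) {r : Fin N → ℝ}
    (hr : ∀ (i : Fin N) (h : (i : ℕ) + 1 < N), α * r i ≤ r ⟨i + 1, h⟩) (q : ℕ) :
    #{i | r i ∈ Set.Ioo (α ^ (-((q : ℝ) / 2))) (α ^ ((q : ℝ) / 2))} ≤ q := by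
  set bad := ({i | r i ∈ Set.Ioo (α ^ (-((q : ℝ) / 2))) (α ^ ((q : ℝ) / 2))} : Finset (Fin N))
  have hgap : ∀ i ∈ bad, ∀ j ∈ bad, i ≤ j → (j : ℕ) < i + q := by
    intro i hi j hj hij
    have hi := (mem_filter.mp hi).2
    have hj := (mem_filter.mp hj).2
    have hk := nat_lt_two_mul_of_pow_mul_le hα hi.1 hj.2
      (pow_sub_mul_le_of_mul_le_succ (by linarith) hr hij)
    have hkq : (((j : ℕ) - i : ℕ) : ℝ) < q := by linarith
    have : (j : ℕ) - i < q := by exact_mod_cast hkq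
    omega
  rw [← card_map Fin.valEmbedding]
  refine card_le_of_forall_lt_add ?_
  simp only [mem_map, Fin.valEmbedding_apply]
  rintro _ ⟨i, hi, rfl⟩ _ ⟨j, hj, rfl⟩ hij
  exact hgap i hi j hj hij

theorem ratio_separation_count_general (ρ₁ ρ₂ : ℝ)
    (hα : 1 < ρ₁ / ρ₂) (N : ℕ) (B B' : Fin N → ℝ)
    (hB : ∀ i, 0 < B i) (hB' : ∀ i, 0 < B' i)
    (hBgrow : ∀ (i : Fin N) (h : (i : ℕ) + 1 < N), ρ₁ ≤ B ⟨(i : ℕ) + 1, h⟩ / B i)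
    (hB'grow : ∀ (i : Fin N) (h : (i : ℕ) + 1 < N), B' ⟨(i : ℕ) + 1, h⟩ / B' i ≤ ρ₂)
    (q : ℕ) :
    (N : ℤ) - q - 1 ≤
      ({i : Fin N |
          B i / B' i ≤ (ρ₁ / ρ₂) ^ (-((q : ℝ) / 2)) ∨
          (ρ₁ / ρ₂) ^ ((q : ℝ) / 2) ≤ B i / B' i} : Set (Fin N)).ncard := by
  have hbad := card_filter_mem_Ioo_rpow_le hα (r := fun i => B i / B' i)
    (fun i h => div_mul_div_le_div_of_le_div (hB i) (hB' i) (hB _).le (hB' _) (hBgrow i h) (hB'grow i h)) q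
  have hK : ({i : Fin N | B i / B' i ≤ (ρ₁ / ρ₂) ^ (-((q : ℝ) / 2)) ∨
      (ρ₁ / ρ₂) ^ ((q : ℝ) / 2) ≤ B i / B' i} : Set (Fin N)) =
      ↑(({i | B i / B' i ∈ Set.Ioo ((ρ₁ / ρ₂) ^ (-((q : ℝ) / 2))) ((ρ₁ / ρ₂) ^ ((q : ℝ) / 2))}
        : Finset (Fin N))ᶜ) := by
    ext i
    simp [or_iff_not_and_not]
  rw [hK, Set.ncard_coe_finset, card_compl, Fintype.card_fin]
  omega

/-- If `B_{i+1}/B_i ≥ ρ₁` and `B'_{i+1}/B'_i ≤ ρ₂` for positive sequences indexed by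
`{1,…,N}` with `α = ρ₁/ρ₂ > 1`, then for any `q ∈ ℕ`, the set of indices `i` at which
`B_i/B'_i ≤ α^{-q/2}` or `B_i/B'_i ≥ α^{q/2}` has cardinality at least `N - q - 1`. -/
theorem ratio_separation_count (ρ₁ ρ₂ : ℝ) (hρ₁ : 0 < ρ₁) (hρ₂ : 0 < ρ₂)
    (hα : 1 < ρ₁ / ρ₂) (N : ℕ) (hN : 0 < N) (B B' : Fin N → ℝ)
    (hB : ∀ i, 0 < B i) (hB' : ∀ i, 0 < B' i)
    (hBgrow : ∀ (i : Fin N) (h : (i : ℕ) + 1 < N), ρ₁ ≤ B ⟨(i : ℕ) + 1, h⟩ / B i)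
    (hB'grow : ∀ (i : Fin N) (h : (i : ℕ) + 1 < N), B' ⟨(i : ℕ) + 1, h⟩ / B' i ≤ ρ₂)
    (q : ℕ) :
    (N : ℤ) - q - 1 ≤
      ({i : Fin N |
          B i / B' i ≤ (ρ₁ / ρ₂) ^ (-((q : ℝ) / 2)) ∨
          (ρ₁ / ρ₂) ^ ((q : ℝ) / 2) ≤ B i / B' i} : Set (Fin N)).ncard :=
  ratio_separation_count_general ρ₁ ρ₂ hα N B B' hB hB' hBgrow hB'grow q
end

section
/- Let r ≥ 2 be an integer and λ ∈ (0, 4^r) a real number with λ^{1/(2r)} ≤ 1/4. Let k ∈ {0,1,…,r−1} and let ρ ∈ ℂ be a root of the quadratic q_k(x) = −(1−x)² − λ^{1/r} e^{2kπi/r} x. If r is even and k = r/2, then ρ is real (its imaginary part is 0). Otherwise, |Im ρ| ≥ (sin(π/(2r))/25) · λ^{1/(2r)} · |ρ|; that is, |sin(arg ρ)| ≥ λ^{1/(2r)} sin(π/(2r))/25. -/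
/-!
For `ρ ≠ 0` the equation `q_k(ρ) = 0` reads `ρ + ρ⁻¹ = 2 - μ e^{iθ}` with `μ = λ^{1/r} ≤ 1/16` and
`θ = 2πk/r`. Writing `ρ = R e^{iφ}` and `t = sin² φ`, one has `Im (ρ + ρ⁻¹) = sin φ (R - R⁻¹)` and
`|ρ + ρ⁻¹|² = 4 - 4t + (R - R⁻¹)²`; eliminating `R` gives
`μ² sin² θ = t (4t + μ² - 4μ cos θ)`, where the last factor is `(R - R⁻¹)² ≥ 0`.
For `θ = π` this forces `t = 0`. For `θ = 0` the nonnegativity of the factor gives `t ≥ μ - μ²/4`.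
Otherwise `cos θ ≥ -1` and `μ ≤ 1/16` give `t ≥ μ sin² θ / 7`, and `|sin θ| ≥ sin (π/r)` since `θ`
lies at distance at least `π/r` from `πℤ`.
-/

open Real

theorem Real.sin_le_sin_of_le_of_le_pi_sub {x y : ℝ} (hy : 0 ≤ y) (hyx : y ≤ x) (hx : x ≤ π - y) :
    sin y ≤ sin x := by
  have hconc := strictConcaveOn_sin_Icc.concaveOn.min_le_of_mem_Icc
    (⟨hy, by linarith⟩ : y ∈ Set.Icc 0 π) (⟨by linarith, by linarith⟩ : π - y ∈ Set.Icc 0 π)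
    ⟨hyx, hx⟩
  rwa [sin_pi_sub, min_self] at hconc

theorem Real.sin_pi_div_le_abs_sin_two_pi_mul_div {k r : ℕ} (hk0 : 0 < k) (hkr : k < r)
    (h2k : 2 * k ≠ r) : sin (π / r) ≤ |sin (2 * π * k / r)| := by
  have hr : (0 : ℝ) < r := by exact_mod_cast hk0.trans hkr
  have hk1 : (1 : ℝ) ≤ k := by exact_mod_cast hk0
  have hk : (k : ℝ) + 1 ≤ r := by exact_mod_cast hkr
  have hpi := pi_pos
  rcases Nat.lt_or_gt_of_ne h2k with h | h
  · have h' : 2 * (k : ℝ) + 1 ≤ r := by exact_mod_cast h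
    refine (sin_le_sin_of_le_of_le_pi_sub (by positivity) ?_ ?_).trans (le_abs_self _)
    · field_simp
      nlinarith
    · field_simp
      nlinarith
  · have h' : (r : ℝ) + 1 ≤ 2 * k := by exact_mod_cast h
    rw [← abs_neg, ← sin_sub_pi]
    refine (sin_le_sin_of_le_of_le_pi_sub (by positivity) ?_ ?_).trans (le_abs_self _)
    · field_simp
      nlinarith
    · field_simp
      nlinarith

theorem Real.sin_sq_pi_div_two_mul_le_sin_sq_two_pi_mul_div {k r : ℕ} (hk0 : 0 < k) (hkr : k < r)
    (h2k : 2 * k ≠ r) : sin (π / (2 * r)) ^ 2 ≤ sin (2 * π * k / r) ^ 2 := by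
  have hr : (2 : ℝ) ≤ r := by exact_mod_cast (show 2 ≤ r by omega)
  have hpi := pi_pos
  have hle : sin (π / (2 * r)) ≤ sin (π / r) :=
    sin_le_sin_of_le_of_le_pi_sub (by positivity)
      (div_le_div_of_nonneg_left hpi.le (by positivity) (by linarith)) (by field_simp; nlinarith)
  rw [← sq_abs (sin (2 * π * k / r))]
  exact pow_le_pow_left₀ (sin_nonneg_of_nonneg_of_le_pi (by positivity) (by
    rw [div_le_iff₀ (by positivity)]; nlinarith))
    (hle.trans (sin_pi_div_le_abs_sin_two_pi_mul_div hk0 hkr h2k)) 2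

theorem Real.rpow_inv_two_mul_sq {x : ℝ} (hx : 0 ≤ x) (y : ℝ) : (x ^ (2 * y)⁻¹) ^ 2 = x ^ y⁻¹ := by
  rw [← rpow_natCast, ← rpow_mul hx]
  congr 1
  push_cast
  ring

theorem mul_sq_div_seven_le_of_sq_mul_sq_le {μ s t : ℝ} (hμ0 : 0 < μ) (hμ : μ ≤ 1 / 16)
    (hs : s ^ 2 ≤ 1) (ht : 0 ≤ t) (h : μ ^ 2 * s ^ 2 ≤ t * (4 * t + μ ^ 2 + 4 * μ)) :
    μ * s ^ 2 / 7 ≤ t := by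
  rcases (sq_nonneg s).eq_or_lt with hs0 | hs0
  · rw [← hs0]
    linarith
  by_contra! hlt
  have : 4 * t + μ ^ 2 + 4 * μ ≤ 5 * μ := by nlinarith
  nlinarith [mul_le_mul_of_nonneg_left this ht]

namespace Complex

theorem im_add_inv (z : ℂ) : (z + z⁻¹).im = z.im / ‖z‖ * (‖z‖ - ‖z‖⁻¹) := by
  rcases eq_or_ne z 0 with rfl | hz
  · simp
  have hR : ‖z‖ ≠ 0 := norm_ne_zero_iff.mpr hz
  rw [add_im, inv_im, normSq_eq_norm_sq]
  field_simp
  ring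

theorem norm_add_inv_sq {z : ℂ} (hz : z ≠ 0) :
    ‖z + z⁻¹‖ ^ 2 = 4 - 4 * (z.im / ‖z‖) ^ 2 + (‖z‖ - ‖z‖⁻¹) ^ 2 := by
  have hR : ‖z‖ ≠ 0 := norm_ne_zero_iff.mpr hz
  have hR2 : ‖z‖ ^ 2 = z.re ^ 2 + z.im ^ 2 := by rw [Complex.sq_norm, normSq_apply]; ring
  rw [Complex.sq_norm, normSq_apply, add_re, add_im, inv_re, inv_im, normSq_eq_norm_sq]
  field_simp
  linear_combination -(1 + ‖z‖ ^ 2) ^ 2 * hR2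

theorem im_two_sub_mul_exp_mul_I (μ θ : ℝ) : (2 - μ * exp (θ * I)).im = -(μ * Real.sin θ) := by
  simp [exp_ofReal_mul_I_re, exp_ofReal_mul_I_im]

theorem norm_two_sub_mul_exp_mul_I_sq (μ θ : ℝ) :
    ‖2 - μ * exp (θ * I)‖ ^ 2 = 4 - 4 * μ * Real.cos θ + μ ^ 2 := by
  rw [Complex.sq_norm, normSq_apply]
  simp [exp_ofReal_mul_I_re, exp_ofReal_mul_I_im]
  linear_combination μ ^ 2 * Real.sin_sq_add_cos_sq θ

theorem mul_le_abs_im_of_sq_le {z : ℂ} {C : ℝ} (h : C ^ 2 ≤ (z.im / ‖z‖) ^ 2) :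
    C * ‖z‖ ≤ |z.im| := by
  rcases eq_or_ne z 0 with rfl | hz
  · simp
  have hC := (le_abs_self C).trans (sq_le_sq.mp h)
  rwa [abs_div, abs_norm, le_div_iff₀ (norm_pos_iff.mpr hz)] at hC

theorem add_inv_eq_two_sub_of_one_sub_sq_add_mul_eq_zero {c z : ℂ} (h : (1 - z) ^ 2 + c * z = 0) :
    z + z⁻¹ = 2 - c := by
  have hz : z ≠ 0 := by
    rintro rfl
    simp at h
  field_simp
  linear_combination h

theorem sq_im_div_norm_of_add_inv_eq {z : ℂ} {μ θ : ℝ} (hz : z ≠ 0)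
    (h : z + z⁻¹ = 2 - μ * exp (θ * I)) :
    μ ^ 2 * Real.sin θ ^ 2 =
        (z.im / ‖z‖) ^ 2 * (4 * (z.im / ‖z‖) ^ 2 + μ ^ 2 - 4 * μ * Real.cos θ) ∧
      0 ≤ 4 * (z.im / ‖z‖) ^ 2 + μ ^ 2 - 4 * μ * Real.cos θ := by
  have him := im_add_inv z
  have hnorm := norm_add_inv_sq hz
  rw [h, im_two_sub_mul_exp_mul_I] at him
  rw [h, norm_two_sub_mul_exp_mul_I_sq] at hnorm
  have hv : (‖z‖ - ‖z‖⁻¹) ^ 2 = 4 * (z.im / ‖z‖) ^ 2 + μ ^ 2 - 4 * μ * Real.cos θ := by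
    linarith
  rw [← hv]
  exact ⟨by linear_combination (z.im / ‖z‖ * (‖z‖ - ‖z‖⁻¹) - μ * Real.sin θ) * him, sq_nonneg _⟩

theorem im_eq_zero_of_add_inv_eq_two_add {z : ℂ} {μ : ℝ} (hz : z ≠ 0) (hμ : 0 < μ)
    (h : z + z⁻¹ = 2 + μ) : z.im = 0 := by
  rw [show (2 : ℂ) + μ = 2 - μ * exp (π * I) by rw [exp_pi_mul_I]; ring] at h
  obtain ⟨hquad, -⟩ := sq_im_div_norm_of_add_inv_eq hz h
  rw [Real.cos_pi, Real.sin_pi] at hquad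
  have ht : (z.im / ‖z‖) ^ 2 = 0 := by nlinarith [sq_nonneg (z.im / ‖z‖)]
  simpa [hz] using ht

theorem half_le_sq_im_div_norm_of_add_inv_eq_two_sub {z : ℂ} {μ : ℝ} (hz : z ≠ 0) (hμ : μ ≤ 2)
    (h : z + z⁻¹ = 2 - μ) : μ / 2 ≤ (z.im / ‖z‖) ^ 2 := by
  rw [show (2 : ℂ) - μ = 2 - μ * exp ((0 : ℝ) * I) by simp] at h
  obtain ⟨-, hdisc⟩ := sq_im_div_norm_of_add_inv_eq hz h
  rw [Real.cos_zero] at hdisc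
  nlinarith

theorem mul_sin_sq_div_seven_le_sq_im_div_norm {z : ℂ} {μ θ : ℝ} (hz : z ≠ 0) (hμ0 : 0 < μ)
    (hμ : μ ≤ 1 / 16) (h : z + z⁻¹ = 2 - μ * exp (θ * I)) :
    μ * Real.sin θ ^ 2 / 7 ≤ (z.im / ‖z‖) ^ 2 := by
  obtain ⟨hquad, -⟩ := sq_im_div_norm_of_add_inv_eq hz h
  have ht := sq_nonneg (z.im / ‖z‖)
  have hcos : 0 ≤ 1 + Real.cos θ := by linarith [Real.neg_one_le_cos θ]
  exact mul_sq_div_seven_le_of_sq_mul_sq_le hμ0 hμ (Real.sin_sq_le_one θ) ht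
    (by nlinarith [mul_nonneg ht (mul_nonneg hμ0.le hcos)])

end Complex

theorem add_inv_eq_of_qfac_eq_zero {r : ℕ} {lam : ℝ} {k : ℕ} {ρ : ℂ} (h : qfac r lam k ρ = 0) :
    ρ + ρ⁻¹ = 2 - ↑(lam ^ (r : ℝ)⁻¹) * Complex.exp (↑(2 * π * k / r) * Complex.I) := by
  refine Complex.add_inv_eq_two_sub_of_one_sub_sq_add_mul_eq_zero ?_
  rw [qfac] at h
  push_cast
  rw [show 2 * (π : ℂ) * k / r * Complex.I = 2 * k * π * Complex.I / r by ring]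
  linear_combination -h

theorem qfac_root_imaginary_part_bound_general
    (r : ℕ) (hr : 2 ≤ r) (lam : ℝ) (hlam0 : 0 < lam)
    (hsmall : lam ^ ((2 * (r : ℝ))⁻¹) ≤ 1 / 4)
    (k : ℕ) (hk : k < r) (ρ : ℂ) (hρ : qfac r lam k ρ = 0) :
    (Even r ∧ 2 * k = r → ρ.im = 0) ∧
    (¬(Even r ∧ 2 * k = r) →
      Real.sin (Real.pi / (2 * r)) / 25 * lam ^ ((2 * (r : ℝ))⁻¹) * ‖ρ‖ ≤
        |ρ.im|) := by
  have hρ0 : ρ ≠ 0 := by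
    rintro rfl
    simp [qfac] at hρ
  have hw := add_inv_eq_of_qfac_eq_zero hρ
  have hsq := rpow_inv_two_mul_sq hlam0.le (r : ℝ)
  set μ := lam ^ (r : ℝ)⁻¹
  have hμ0 : 0 < μ := by positivity
  have hμ : μ ≤ 1 / 16 := by
    rw [← hsq]
    nlinarith [rpow_pos_of_pos hlam0 (2 * (r : ℝ))⁻¹]
  refine ⟨fun ⟨_, h2k⟩ => ?_, fun hne => ?_⟩
  · have hθ : 2 * π * k / r = π := by
      have hr0 : (r : ℝ) ≠ 0 := Nat.cast_ne_zero.mpr (zero_lt_two.trans_le hr).ne'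
      field_simp
      exact_mod_cast h2k
    rw [hθ, Complex.exp_pi_mul_I] at hw
    exact Complex.im_eq_zero_of_add_inv_eq_two_add hρ0 hμ0 (by rw [hw]; ring)
  · apply Complex.mul_le_abs_im_of_sq_le
    rw [mul_pow, div_pow, hsq]
    rcases Nat.eq_zero_or_pos k with rfl | hk0
    · have hm := sin_sq_le_one (π / (2 * r))
      have hw0 : ρ + ρ⁻¹ = 2 - μ := by simpa using hw
      have ht := Complex.half_le_sq_im_div_norm_of_add_inv_eq_two_sub hρ0 (by linarith) hw0
      nlinarith
    · have ht := Complex.mul_sin_sq_div_seven_le_sq_im_div_norm hρ0 hμ0 hμ hw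
      have hs := sin_sq_pi_div_two_mul_le_sin_sq_two_pi_mul_div hk0 hk
        fun h => hne ⟨⟨k, by omega⟩, h⟩
      nlinarith

/-- For `r ≥ 2`, `λ ∈ (0, 4^r)` with `λ^{1/(2r)} ≤ 1/4`, and `k ∈ {0,…,r-1}`: if `r` is
even and `k = r/2`, every root of `q_k` is real; otherwise every root `ρ` of `q_k`
satisfies `|Im ρ| ≥ (sin(π/(2r))/25) · λ^{1/(2r)} · |ρ|`. -/
theorem qfac_root_imaginary_part_bound
    (r : ℕ) (hr : 2 ≤ r) (lam : ℝ) (hlam0 : 0 < lam) (hlam4 : lam < 4 ^ r)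
    (hsmall : lam ^ ((2 * (r : ℝ))⁻¹) ≤ 1 / 4)
    (k : ℕ) (hk : k < r) (ρ : ℂ) (hρ : qfac r lam k ρ = 0) :
    (Even r ∧ 2 * k = r → ρ.im = 0) ∧
    (¬(Even r ∧ 2 * k = r) →
      Real.sin (Real.pi / (2 * r)) / 25 * lam ^ ((2 * (r : ℝ))⁻¹) * ‖ρ‖ ≤
        |ρ.im|) :=
  qfac_root_imaginary_part_bound_general r hr lam hlam0 hsmall k hk ρ hρ
end
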